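/- arXiv:1301.0095 — 10 statements merged into one kernel-verified Lean document; each statement's English description precedes it below -/
import Mathlib

section
/- Let G be a finite abelian group and let A*, B* be nonempty subsets with H = G_{A*+B*} the stabilizer of A*+B*. Suppose (A*,B*) is pure and critical (so |A*+B*| = |A*|+|B*|-|H| by Kneser's theorem). If A ⊆ A* and B ⊆ B* satisfy |A* \ A| + |B* \ B| < |H|, then A + B = A* + B*. -/
open Pointwise

/-- The stabilizer of a set `A` in an additive abelian group. -/
def stab {G : Type*} [AddCommGroup G] (A : Set G) : Set G := {g : G | ({g} : Set G) + A = A}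

theorem stmt_3 {G : Type*} [AddCommGroup G] [Fintype G]
    (Astar Bstar : Set G) (hA : Astar.Nonempty) (hB : Bstar.Nonempty)
    (H : Set G) (hH : H = stab (Astar + Bstar))
    (hpureA : stab Astar = H) (hpureB : stab Bstar = H)
    (hcrit : (Astar + Bstar).ncard < Astar.ncard + Bstar.ncard)
    (A B : Set G) (hAsub : A ⊆ Astar) (hBsub : B ⊆ Bstar)
    (hsmall : (Astar \ A).ncard + (Bstar \ B).ncard < H.ncard) :
    A + B = Astar + Bstar := by
  apply Set.Subset.antisymm (Set.add_subset_add hAsub hBsub)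
  intro c hc
  rw [Set.mem_add] at hc
  obtain ⟨a0, ha0, b0, hb0, hab⟩ := hc
  -- A* is stable under adding elements of H
  have hAh : ∀ h ∈ H, ∀ a ∈ Astar, h + a ∈ Astar := by
    intro h hh a ha
    have h1 : h ∈ stab Astar := hpureA ▸ hh
    rw [stab, Set.mem_setOf_eq] at h1
    rw [← h1]
    exact Set.add_mem_add rfl ha
  -- B* is stable under subtracting elements of H
  have hBh : ∀ h ∈ H, ∀ b ∈ Bstar, b - h ∈ Bstar := by
    intro h hh b hb
    have h1 : h ∈ stab Bstar := hpureB ▸ hh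
    rw [stab, Set.mem_setOf_eq] at h1
    rw [← h1] at hb
    rw [Set.mem_add] at hb
    obtain ⟨x, hx, y, hy, hxy⟩ := hb
    rw [Set.mem_singleton_iff] at hx
    rw [hx] at hxy
    have : b - h = y := by rw [← hxy]; abel
    rwa [this]
  set S : Set G := {a | a ∈ Astar ∧ c - a ∈ Bstar} with hSdef
  have himg : (fun h => a0 + h) '' H ⊆ S := by
    rintro x ⟨h, hh, rfl⟩
    refine ⟨?_, ?_⟩
    · show a0 + h ∈ Astar
      rw [add_comm]; exact hAh h hh a0 ha0
    · show c - (a0 + h) ∈ Bstar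
      have : c - (a0 + h) = b0 - h := by rw [← hab]; abel
      rw [this]; exact hBh h hh b0 hb0
  have hScard : H.ncard ≤ S.ncard := by
    have h1 : ((fun h => a0 + h) '' H).ncard = H.ncard :=
      Set.ncard_image_of_injective H (add_right_injective a0)
    calc H.ncard = ((fun h => a0 + h) '' H).ncard := h1.symm
      _ ≤ S.ncard := Set.ncard_le_ncard himg (Set.toFinite S)
  set Bad : Set G := (Astar \ A) ∪ ((fun b => c - b) '' (Bstar \ B)) with hBadDef
  have hBadCard : Bad.ncard < H.ncard := by
    have h1 : Bad.ncard ≤ (Astar \ A).ncard + ((fun b => c - b) '' (Bstar \ B)).ncard :=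
      Set.ncard_union_le _ _
    have h2 : ((fun b => c - b) '' (Bstar \ B)).ncard ≤ (Bstar \ B).ncard :=
      Set.ncard_image_le (Set.toFinite _)
    omega
  have hnot : ¬ S ⊆ Bad := by
    intro hsub
    have := Set.ncard_le_ncard hsub (Set.toFinite Bad)
    omega
  obtain ⟨a, haS, haBad⟩ := Set.not_subset.mp hnot
  obtain ⟨haA, haB⟩ := haS
  have haA' : a ∈ A := by
    by_contra hcon
    exact haBad (Or.inl ⟨haA, hcon⟩)
  have haB' : c - a ∈ B := by
    by_contra hcon
    refine haBad (Or.inr ⟨c - a, ⟨haB, hcon⟩, ?_⟩)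
    simp
  exact Set.mem_add.mpr ⟨a, haA', c - a, haB', by abel⟩
end

section
/- Let G be an abelian group and A, B finite nonempty subsets of G with A + B ≠ G. If A is not contained in any coset of a proper subgroup of G (i.e., the closure of A is all of G), then |A+B| ≥ (1/2)|A| + |B|. -/
/-!
Let `H` be the stabilizer of `A + B`. Since `A + B ≠ G`, `H` is proper, so `A` lies in no coset
of `H`; for all such pairs of finite sets we prove `2|A + B| ≥ |A| + 2|B|` by induction on
`(|A + B|, |A|)`, ordered lexicographically.

If `H` is nontrivial, pass to `G ⧸ H`: there the stabilizer is trivial, `|A + B|` shrinks by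
exactly the factor `|H|`, and `|A|`, `|B|` by at most `|H|`.

If `H` is trivial, a Dyson e-transform gives `A' ⊆ A`, `B' ⊇ B` with `A' + B' ⊆ A + B`,
`|A'| + |B'| = |A| + |B|` and `|A'| < |A|`. If `|A'| ≤ |A| / 2`, the bound `|A + B| ≥ |B'|`
already suffices. Otherwise either induction applies to `(A', B')`, or `A'` lies in one coset
`a + K` of `K = stab(A' + B')`. In that case `a + B + K ⊆ A' + B' ⊆ A + B` while `K` does not
stabilize `A + B`, and a coset of `K` only partly covered by `A + B` yields
`|A + B| ≥ |B| + |K| ≥ |B| + |A'|`.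
-/

open Pointwise Finset AddAction

universe u

section Quotient

variable {G : Type*} [AddCommGroup G] {K : AddSubgroup G}

lemma card_le_natCard_of_coe_subset_vadd [Finite K] {s : Finset G} {x : G}
    (h : (s : Set G) ⊆ x +ᵥ (K : Set G)) : #s ≤ Nat.card K := by
  calc #s = (s : Set G).ncard := (Set.ncard_coe_finset s).symm
    _ ≤ (x +ᵥ (K : Set G)).ncard := Set.ncard_le_ncard h (Set.toFinite (K : Set G)).vadd_set
    _ = Nat.card K := by rw [Set.ncard_vadd_set]; exact (Nat.card_coe_set_eq _).symm

lemma natCard_preimage_mk (u : Finset (G ⧸ K)) :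
    Nat.card ((↑) ⁻¹' (u : Set (G ⧸ K)) : Set G) = Nat.card K * #u := by
  rw [Nat.card_congr (QuotientAddGroup.preimageMkEquivAddSubgroupProdSet K u), Nat.card_prod,
    Nat.card_coe_set_eq, Set.ncard_coe_finset]

variable [DecidableEq (G ⧸ K)]

lemma coe_subset_vadd_of_image_mk_subset_singleton {s : Finset G} {a : G} (ha : a ∈ s)
    {x : G ⧸ K} (h : (s.image ((↑) : G → G ⧸ K) : Set (G ⧸ K)) ⊆ {x}) :
    (s : Set G) ⊆ a +ᵥ (K : Set G) := by
  have hx : ∀ y ∈ s, (y : G ⧸ K) = x := fun y hy ↦ h (mem_coe.2 (mem_image_of_mem _ hy))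
  exact fun y hy ↦
    (mem_leftAddCoset_iff a).2 (QuotientAddGroup.eq.1 ((hx a ha).trans (hx y hy).symm))

lemma card_le_natCard_mul_card_image_mk [Finite K] (s : Finset G) :
    #s ≤ Nat.card K * #(s.image ((↑) : G → G ⧸ K)) := by
  have : Finite ((↑) ⁻¹' (s.image ((↑) : G → G ⧸ K) : Set (G ⧸ K)) : Set G) :=
    .of_equiv _ (QuotientAddGroup.preimageMkEquivAddSubgroupProdSet K _).symm
  rw [← natCard_preimage_mk, ← Nat.card_eq_finsetCard]
  exact Nat.card_mono (Set.toFinite _) (by rw [coe_image]; exact Set.subset_preimage_image _ _)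

variable [DecidableEq G]

lemma card_eq_natCard_mul_card_image_mk {s : Finset G} (hK : K ≤ stabilizer G s) :
    #s = Nat.card K * #(s.image ((↑) : G → G ⧸ K)) := by
  have hsK : (s : Set G) + K = s := by
    refine Set.Subset.antisymm ?_ (Set.subset_add_left _ K.zero_mem)
    calc (s : Set G) + K ⊆ s + stabilizer G (s : Set G) :=
          Set.add_subset_add_left (by rwa [stabilizer_coe_finset])
      _ = s := add_stabilizer_self _
  rw [← natCard_preimage_mk, coe_image, QuotientAddGroup.preimage_image_mk_eq_add, hsK,
    Nat.card_coe_set_eq, Set.ncard_coe_finset]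

lemma card_image_mk_lt [Finite K] (hK : K ≠ ⊥) {s : Finset G} (hs : s.Nonempty)
    (hKs : K ≤ stabilizer G s) : #(s.image ((↑) : G → G ⧸ K)) < #s := by
  rw [card_eq_natCard_mul_card_image_mk hKs]
  exact lt_mul_left (hs.image _).card_pos ((AddSubgroup.one_lt_card_iff_ne_bot K).2 hK)

variable (K) in
lemma image_mk_add (s t : Finset G) :
    (s + t).image ((↑) : G → G ⧸ K) = s.image (↑) + t.image (↑) := by
  simpa using image_add (QuotientAddGroup.mk' K) (s := s) (t := t)

lemma card_add_two_mul_card_le_of_image_mk [Finite K] {s t : Finset G}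
    (hK : K ≤ stabilizer G (s + t))
    (h : #(s.image ((↑) : G → G ⧸ K)) + 2 * #(t.image ((↑) : G → G ⧸ K)) ≤
      2 * #(s.image ((↑) : G → G ⧸ K) + t.image (↑))) :
    #s + 2 * #t ≤ 2 * #(s + t) := by
  rw [card_eq_natCard_mul_card_image_mk hK, image_mk_add]
  have hs := card_le_natCard_mul_card_image_mk (K := K) s
  have ht := card_le_natCard_mul_card_image_mk (K := K) t
  linarith [Nat.mul_le_mul_left (Nat.card K) h]

end Quotient

section Stabilizer

variable {G : Type*} [AddCommGroup G] [DecidableEq G]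

lemma finite_stabilizer_finset {s : Finset G} (hs : s.Nonempty) : Finite (stabilizer G s) := by
  rw [← stabilizer_coe_finset]
  exact (stabilizer_finite (coe_nonempty.2 hs) s.finite_toSet).to_subtype

lemma stabilizer_image_mk_eq_bot (s : Finset G) [DecidableEq (G ⧸ stabilizer G s)] :
    stabilizer (G ⧸ stabilizer G s) (s.image ((↑) : G → G ⧸ stabilizer G s)) = ⊥ := by
  have h := stabilizer_image_coe_quotient (s : Set G)
  rw [stabilizer_coe_finset] at h
  rwa [← stabilizer_coe_finset (s.image _), coe_image]

lemma not_subset_vadd_stabilizer_image_mk {s t : Finset G}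
    [DecidableEq (G ⧸ stabilizer G (s + t))]
    (hs : ∀ a : G, ¬ (s : Set G) ⊆ a +ᵥ (stabilizer G (s + t) : Set G))
    (x : G ⧸ stabilizer G (s + t)) :
    ¬ (s.image ((↑) : G → G ⧸ stabilizer G (s + t)) : Set (G ⧸ stabilizer G (s + t))) ⊆
      x +ᵥ (stabilizer (G ⧸ stabilizer G (s + t))
        (s.image ((↑) : G → G ⧸ stabilizer G (s + t)) + t.image (↑)) :
          Set (G ⧸ stabilizer G (s + t))) := by
  intro hx
  rw [← image_mk_add, stabilizer_image_mk_eq_bot, AddSubgroup.coe_bot, Set.vadd_set_singleton,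
    vadd_eq_add, add_zero] at hx
  obtain ⟨a, ha⟩ : s.Nonempty := nonempty_iff_ne_empty.2 fun h ↦ hs 0 (by simp [h])
  exact hs a (coe_subset_vadd_of_image_mk_subset_singleton ha hx)

lemma coe_eq_univ_of_stabilizer_eq_top {s : Finset G} (hs : s.Nonempty)
    (h : stabilizer G s = ⊤) : (s : Set G) = Set.univ := by
  obtain ⟨x, hx⟩ := hs
  refine Set.eq_univ_of_forall fun y ↦ ?_
  have hyx : y - x ∈ stabilizer G s := h ▸ AddSubgroup.mem_top _
  simpa using mem_stabilizer_finset'.1 hyx hx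

lemma mem_stabilizer_add_of_forall_add_mem {s t : Finset G} {g : G} (h : ∀ b ∈ t, g + b ∈ t) :
    g ∈ stabilizer G (s + t) := by
  refine mem_stabilizer_finset'.2 fun x hx ↦ ?_
  obtain ⟨a, ha, b, hb, rfl⟩ := mem_add.1 hx
  rw [vadd_eq_add, add_left_comm]
  exact add_mem_add ha (h b hb)

end Stabilizer

section Transform

variable {G : Type*} [AddCommGroup G] [DecidableEq G]

lemma exists_card_addDysonETransform_snd_lt {s t : Finset G} (hs : 1 < #s)
    (hst : stabilizer G (s + t) = ⊥) (a : G) :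
    ∃ b ∈ t, #(addDysonETransform (b - a) (t, s)).2 < #s := by
  by_contra! h
  refine hs.not_ge (card_le_one.2 fun x hx y hy ↦ ?_)
  suffices ∀ x ∈ s, x = a by rw [this x hx, this y hy]
  intro x hx
  rw [← sub_eq_zero, ← AddSubgroup.mem_bot, ← hst]
  refine mem_stabilizer_add_of_forall_add_mem fun b hb ↦ ?_
  have hsub : s ⊆ -(b - a) +ᵥ t := by
    simpa using eq_of_subset_of_card_le inter_subset_left (h b hb)
  obtain ⟨y, hy, hyx⟩ := mem_vadd_finset.1 (hsub hx)
  rwa [show x - a + b = y by rw [← hyx, vadd_eq_add]; abel]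

lemma exists_transform_of_stabilizer_eq_bot {s t : Finset G} (hs : 1 < #s)
    (hst : stabilizer G (s + t) = ⊥) {a : G} (ha : a ∈ s) :
    ∃ s' t' : Finset G,
      a ∈ s' ∧ t ⊆ t' ∧ s' + t' ⊆ s + t ∧ #s' + #t' = #s + #t ∧ #s' < #s := by
  obtain ⟨b, hb, hlt⟩ := exists_card_addDysonETransform_snd_lt hs hst a
  refine ⟨_, (addDysonETransform (b - a) (t, s)).1, ?_, subset_union_left, ?_, ?_, hlt⟩
  · simp only [addDysonETransform_snd, mem_inter, mem_vadd_finset]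
    exact ⟨ha, b, hb, by rw [vadd_eq_add]; abel⟩
  · rw [add_comm, add_comm s]; exact addDysonETransform.subset _ _
  · rw [add_comm, add_comm #s]; exact addDysonETransform.card _ _

lemma card_sdiff_vadd_add_card_le_card_add {t k : Finset G} {b : G} (hb : b ∈ t) (hk : 0 ∈ k) :
    #(t \ (b +ᵥ k)) + #k ≤ #(t + k) := by
  rw [← card_vadd_finset b k, ← card_union_of_disjoint sdiff_disjoint]
  refine card_le_card (union_subset (fun y hy ↦ ?_) fun y hy ↦ ?_)
  · exact mem_add.2 ⟨y, (mem_sdiff.1 hy).1, 0, hk, add_zero y⟩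
  · obtain ⟨k₁, hk₁, rfl⟩ := mem_vadd_finset.1 hy
    exact add_mem_add hb hk₁

lemma card_add_natCard_le_card_add {K : AddSubgroup G} [Finite K] {s t : Finset G} {a : G}
    (hsub : ∀ y ∈ t, ∀ k ∈ K, a + y + k ∈ s + t) (hK : ¬ K ≤ stabilizer G (s + t)) :
    #t + Nat.card K ≤ #(s + t) := by
  obtain ⟨k₀, hk₀, hk₀S⟩ := SetLike.not_le_iff_exists.1 hK
  rw [mem_stabilizer_finset'] at hk₀S
  push Not at hk₀S
  obtain ⟨_, hx, hx₀⟩ := hk₀S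
  obtain ⟨a', ha', b', hb', rfl⟩ := mem_add.1 hx
  obtain ⟨k, hk⟩ : ∃ k : Finset G, (k : Set G) = K :=
    ⟨_, (Set.toFinite (K : Set G)).coe_toFinset⟩
  have hmemk (g : G) : g ∈ k ↔ g ∈ K := Set.ext_iff.1 hk g
  have hkK : #k = Nat.card K := by
    rw [← Set.ncard_coe_finset, hk]; exact (Nat.card_coe_set_eq _).symm
  -- The coset `a' + b' + K` contains `k₀ + a' + b' ∉ s + t`, so it misses
  -- `a + (t + K) ⊆ s + t`; yet `s + t` meets it in `a' + (t ∩ (b' + K))`.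
  have hdisj : Disjoint (a +ᵥ (t + k)) (a' +ᵥ (t ∩ (b' +ᵥ k))) := by
    refine disjoint_left.2 fun z h₁ h₂ ↦ hx₀ ?_
    obtain ⟨_, hz, rfl⟩ := mem_vadd_finset.1 h₁
    obtain ⟨y, hy, k₁, hk₁, rfl⟩ := mem_add.1 hz
    obtain ⟨w, hw, hwz⟩ := mem_vadd_finset.1 h₂
    obtain ⟨k₂, hk₂, rfl⟩ := mem_vadd_finset.1 (mem_inter.1 hw).2
    simp only [vadd_eq_add] at hwz ⊢
    have : k₀ + (a' + b') = a + y + (k₁ - k₂ + k₀) := by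
      calc k₀ + (a' + b') = a' + (b' + k₂) + (k₀ - k₂) := by abel
        _ = a + y + (k₁ - k₂ + k₀) := by rw [hwz]; abel
    rw [this]
    exact hsub y hy _ (K.add_mem (K.sub_mem ((hmemk _).1 hk₁) ((hmemk _).1 hk₂)) hk₀)
  have hunion : (a +ᵥ (t + k)) ∪ (a' +ᵥ (t ∩ (b' +ᵥ k))) ⊆ s + t := by
    refine union_subset (fun _ hz ↦ ?_) fun _ hz ↦ ?_
    · obtain ⟨_, hw, rfl⟩ := mem_vadd_finset.1 hz
      obtain ⟨y, hy, k₁, hk₁, rfl⟩ := mem_add.1 hw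
      rw [vadd_eq_add, ← add_assoc]
      exact hsub y hy k₁ ((hmemk _).1 hk₁)
    · obtain ⟨y, hy, rfl⟩ := mem_vadd_finset.1 hz
      exact add_mem_add ha' (mem_inter.1 hy).1
  have htk := card_sdiff_vadd_add_card_le_card_add hb' ((hmemk 0).2 K.zero_mem)
  have hcard := card_le_card hunion
  rw [card_union_of_disjoint hdisj, card_vadd_finset, card_vadd_finset] at hcard
  have := card_sdiff_add_card_inter t (b' +ᵥ k)
  omega

lemma card_add_two_mul_card_le_of_stabilizer_eq_bot {s t : Finset G} (hs : 1 < #s)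
    (ht : t.Nonempty) (hst : stabilizer G (s + t) = ⊥)
    (ih : ∀ s' t' : Finset G, #(s' + t') ≤ #(s + t) → #s' < #s →
      (∀ a : G, ¬ (s' : Set G) ⊆ a +ᵥ (stabilizer G (s' + t') : Set G)) →
      #s' + 2 * #t' ≤ 2 * #(s' + t')) :
    #s + 2 * #t ≤ 2 * #(s + t) := by
  obtain ⟨a, ha⟩ := Finset.card_pos.1 (zero_lt_one.trans hs)
  obtain ⟨s', t', has', htt', hsub, hcard, hshrink⟩ :=
    exists_transform_of_stabilizer_eq_bot hs hst ha
  have hs't' : #(s' + t') ≤ #(s + t) := card_le_card hsub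
  have ht's't' : #t' ≤ #(s' + t') := card_le_card_add_left ⟨a, has'⟩
  obtain hbig | hsmall := le_or_gt #s (2 * (#s - #s'))
  · omega
  by_cases hcoset : ∃ x : G, (s' : Set G) ⊆ x +ᵥ (stabilizer G (s' + t') : Set G)
  · obtain ⟨x, hx⟩ := hcoset
    set K := stabilizer G (s' + t')
    have : Finite K := finite_stabilizer_finset (Finset.Nonempty.add ⟨a, has'⟩ (ht.mono htt'))
    have hs'K := card_le_natCard_of_coe_subset_vadd hx
    have hK : K ≠ ⊥ := (AddSubgroup.one_lt_card_iff_ne_bot K).1 (by omega)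
    have hadd : ∀ y ∈ t, ∀ k ∈ K, a + y + k ∈ s + t := fun y hy k hk ↦
      hsub (add_comm k (a + y) ▸ mem_stabilizer_finset'.1 hk (add_mem_add has' (htt' hy)))
    have := card_add_natCard_le_card_add hadd (by rwa [hst, le_bot_iff])
    omega
  · have := ih s' t' hs't' hshrink (not_exists.1 hcoset)
    omega

end Transform

theorem card_add_two_mul_card_le_of_not_subset_coset {G : Type u} [AddCommGroup G]
    [DecidableEq G] {s t : Finset G}
    (hs : ∀ a : G, ¬ (s : Set G) ⊆ a +ᵥ (stabilizer G (s + t) : Set G)) :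
    #s + 2 * #t ≤ 2 * #(s + t) := by
  classical
  obtain ⟨a, ha⟩ : s.Nonempty := nonempty_iff_ne_empty.2 fun h ↦ hs 0 (by simp [h])
  have hst : (s + t).Nonempty := nonempty_iff_ne_empty.2 fun h ↦ hs 0 (by simp [h])
  by_cases hH : stabilizer G (s + t) = ⊥
  · rw [hH] at hs
    have hs₁ : 1 < #s := by
      by_contra! h
      exact hs a fun y hy ↦ by simp [card_le_one.1 h y hy a ha]
    exact card_add_two_mul_card_le_of_stabilizer_eq_bot hs₁ hst.of_add_right hH
      fun s' t' _ _ hs' ↦ card_add_two_mul_card_le_of_not_subset_coset hs'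
  · have : Finite (stabilizer G (s + t)) := finite_stabilizer_finset hst
    have hlt : #(s.image ((↑) : G → G ⧸ stabilizer G (s + t)) + t.image (↑)) < #(s + t) :=
      image_mk_add (stabilizer G (s + t)) s t ▸ card_image_mk_lt hH hst le_rfl
    exact card_add_two_mul_card_le_of_image_mk le_rfl
      (card_add_two_mul_card_le_of_not_subset_coset (not_subset_vadd_stabilizer_image_mk hs))
termination_by (#(s + t), #s)
decreasing_by
  all_goals rw [Prod.lex_def]; omega

theorem stmt_8 {G : Type*} [AddCommGroup G]
    (A B : Set G) (hAfin : A.Finite) (hBfin : B.Finite)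
    (hA : A.Nonempty) (hB : B.Nonempty) (hAB : A + B ≠ Set.univ)
    (hclosure : ∀ (H : AddSubgroup G) (x : G), A ⊆ x +ᵥ (H : Set G) → H = ⊤) :
    2 * (A + B).ncard ≥ A.ncard + 2 * B.ncard := by
  classical
  lift A to Finset G using hAfin
  lift B to Finset G using hBfin
  rw [← coe_add] at hAB ⊢
  simp only [Set.ncard_coe_finset]
  refine card_add_two_mul_card_le_of_not_subset_coset fun a ha ↦ hAB ?_
  exact coe_eq_univ_of_stabilizer_eq_top ((coe_nonempty.1 hA).add (coe_nonempty.1 hB))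
    (hclosure _ a ha)
end

section
/- Let G be an abelian group and A ⊂ G a finite nonempty subset with δ(A) > 0, where δ(A) = max{|A|+|B|-|A+B| : B finite nonempty, A+B ≠ G}. Then there exists a finite subgroup H < G with A + H ≠ G and |A| + |H| - |A+H| = δ(A). -/
open Pointwise

private lemma tr_ncard {G : Type*} [AddCommGroup G] (S : Set G) (c : G) :
    (S + ({c} : Set G)).ncard = S.ncard := by
  rw [Set.add_singleton, Set.ncard_image_of_injective _ (add_left_injective c)]

private lemma tr_compl {G : Type*} [AddCommGroup G] (S : Set G) (c : G) :
    (S + ({c} : Set G))ᶜ = Sᶜ + {c} := by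
  rw [Set.add_singleton, Set.add_singleton,
    Set.image_compl_eq (f := fun x => x + c) (Equiv.addRight c).bijective]

private lemma tr_univ {G : Type*} [AddCommGroup G] (S : Set G) (c : G) :
    S + ({c} : Set G) = Set.univ ↔ S = Set.univ := by
  rw [← Set.compl_empty_iff, ← Set.compl_empty_iff (s := S), tr_compl,
    Set.add_singleton, Set.image_eq_empty]

theorem stmt_10 {G : Type*} [AddCommGroup G]
    (A : Set G) (hAfin : A.Finite) (hA : A.Nonempty)
    (d : ℤ) (hdpos : d > 0)
    (hmax : IsGreatest {k : ℤ | ∃ B : Set G, B.Finite ∧ B.Nonempty ∧ A + B ≠ Set.univ ∧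
      (A.ncard : ℤ) + B.ncard - (A + B).ncard = k} d) :
    ∃ H : AddSubgroup G, (H : Set G).Finite ∧ A + (H : Set G) ≠ Set.univ ∧
      (A.ncard : ℤ) + (H : Set G).ncard - (A + (H : Set G)).ncard = d := by
  classical
  set att : Set G → Prop := fun B => B.Finite ∧ B.Nonempty ∧ A + B ≠ Set.univ ∧
      (A.ncard : ℤ) + B.ncard - (A + B).ncard = d with hatt
  have hub : ∀ B : Set G, B.Finite → B.Nonempty → A + B ≠ Set.univ →
      (A.ncard : ℤ) + B.ncard - (A + B).ncard ≤ d := fun B h1 h2 h3 =>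
    hmax.2 ⟨B, h1, h2, h3, rfl⟩
  -- a translate of an attainer is an attainer
  have htr : ∀ (B' : Set G) (c : G), att B' → att (B' + {c}) := by
    rintro B' c ⟨h1, h2, h3, h4⟩
    have hassoc : A + (B' + {c}) = (A + B') + {c} := (add_assoc A B' {c}).symm
    refine ⟨h1.add (Set.finite_singleton c), h2.add (Set.singleton_nonempty c), ?_, ?_⟩
    · rw [hassoc, Ne, tr_univ]; exact h3
    · rw [hassoc, tr_ncard, tr_ncard]; exact h4
  -- pick an attainer of minimal cardinality
  have hex : ∃ n, ∃ B : Set G, att B ∧ B.ncard = n := by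
    obtain ⟨B0, h1, h2, h3, h4⟩ := hmax.1
    exact ⟨B0.ncard, B0, ⟨h1, h2, h3, h4⟩, rfl⟩
  obtain ⟨B, hB, hBn⟩ := Nat.find_spec hex
  have hmin : ∀ B' : Set G, att B' → B.ncard ≤ B'.ncard := by
    intro B' h'
    rw [hBn]
    exact Nat.find_min' hex ⟨B', h', rfl⟩
  obtain ⟨b0, hb0⟩ := hB.2.1
  -- translate so that 0 ∈ B1
  set B1 : Set G := B + {-b0} with hB1def
  have hB1 : att B1 := htr B (-b0) hB
  have h01 : (0 : G) ∈ B1 := ⟨b0, hb0, -b0, rfl, by simp⟩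
  have hmin1 : ∀ B' : Set G, att B' → B1.ncard ≤ B'.ncard := by
    intro B' h'
    rw [hB1def, tr_ncard]
    exact hmin B' h'
  -- key step : B1 is closed under adding its elements
  have key : ∀ b ∈ B1, ∀ x ∈ B1, x + b ∈ B1 := by
    intro b hb
    set B2 : Set G := B1 + {-b} with hB2def
    have hB2 : att B2 := htr B1 (-b) hB1
    have h02 : (0 : G) ∈ B2 := ⟨b, hb, -b, rfl, by simp⟩
    have hIne : (B1 ∩ B2).Nonempty := ⟨0, h01, h02⟩
    have hIfin : (B1 ∩ B2).Finite := hB1.1.subset Set.inter_subset_left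
    have hAB2 : A + B2 = (A + B1) + {-b} := (add_assoc A B1 {-b}).symm
    have hABc : (A + B2).ncard = (A + B1).ncard := by rw [hAB2, tr_ncard]
    have hB2c : B2.ncard = B1.ncard := tr_ncard B1 (-b)
    have hAIsub : A + (B1 ∩ B2) ⊆ (A + B1) ∩ (A + B2) :=
      Set.subset_inter (Set.add_subset_add_left Set.inter_subset_left)
        (Set.add_subset_add_left Set.inter_subset_right)
    have hAB1fin : (A + B1).Finite := hAfin.add hB1.1
    have hAB2fin : (A + B2).Finite := hAfin.add hB2.1
    have hAIne : A + (B1 ∩ B2) ≠ Set.univ := by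
      intro h
      exact hB1.2.2.1 (Set.eq_univ_of_univ_subset
        (h ▸ Set.add_subset_add_left Set.inter_subset_left))
    have hId : (A.ncard : ℤ) + (B1 ∩ B2).ncard - (A + (B1 ∩ B2)).ncard ≤ d :=
      hub _ hIfin hIne hAIne
    have hIcard : (0 : ℤ) < (B1 ∩ B2).ncard := by
      exact_mod_cast (Set.ncard_pos hIfin).mpr hIne
    have hd1 : (A.ncard : ℤ) + B1.ncard - (A + B1).ncard = d := hB1.2.2.2
    by_cases hU : A + (B1 ∪ B2) = Set.univ
    · -- the "bad" case : impossible
      exfalso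
      have hGfin : Finite G :=
        Set.finite_univ_iff.mp (hU ▸ (hAfin.add (hB1.1.union hB2.1)))
      set C : Set G := (A + B1)ᶜ with hCdef
      have hCfin : C.Finite := Set.toFinite C
      have hCne : C.Nonempty := Set.nonempty_compl.mpr hB1.2.2.1
      have hCcard : (A + B1).ncard + C.ncard = Nat.card G :=
        Set.ncard_add_ncard_compl _ hAB1fin hCfin
      -- the dual attainer -C
      have hDne : (-C).Nonempty := hCne.neg
      have hDfin : (-C).Finite := Set.toFinite _
      have hADsub : A + (-C) ⊆ (-B1)ᶜ := by
        rintro z hz hz2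
        simp only [Set.mem_add] at hz
        obtain ⟨a, ha, x, hx, hax⟩ := hz
        rw [Set.mem_neg] at hz2
        have hmem : -x ∈ A + B1 := ⟨a, ha, -z, hz2, by rw [← hax]; abel⟩
        exact Set.mem_neg.mp hx hmem
      have hADne : A + (-C) ≠ Set.univ := by
        intro h
        have h0 : (0 : G) ∈ A + (-C) := h ▸ Set.mem_univ 0
        have h0' : (0 : G) ∈ (-B1)ᶜ := hADsub h0
        exact h0' (Set.mem_neg.mpr (by rwa [neg_zero]))
      have hDd : (A.ncard : ℤ) + (-C).ncard - (A + (-C)).ncard ≤ d :=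
        hub _ hDfin hDne hADne
      have hnegB1 : (-B1).ncard = B1.ncard := Set.ncard_neg B1
      have hnegC : (-C).ncard = C.ncard := Set.ncard_neg C
      have hADcard : ((A + (-C)).ncard : ℤ) ≤ (Nat.card G : ℤ) - B1.ncard := by
        have h1 : (A + (-C)).ncard ≤ ((-B1)ᶜ).ncard :=
          Set.ncard_le_ncard hADsub (Set.toFinite _)
        have h2 : (-B1).ncard + ((-B1)ᶜ).ncard = Nat.card G :=
          Set.ncard_add_ncard_compl _ (Set.toFinite _) (Set.toFinite _)
        rw [hnegB1] at h2
        have h1' : ((A + (-C)).ncard : ℤ) ≤ ((-B1)ᶜ).ncard := by exact_mod_cast h1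
        have h2' : (B1.ncard : ℤ) + ((-B1)ᶜ).ncard = Nat.card G := by exact_mod_cast h2
        linarith
      have hCcard' : ((A + B1).ncard : ℤ) + C.ncard = Nat.card G := by exact_mod_cast hCcard
      have hnegC' : ((-C).ncard : ℤ) = C.ncard := by exact_mod_cast hnegC
      have hDge : d ≤ (A.ncard : ℤ) + (-C).ncard - (A + (-C)).ncard := by
        rw [hnegC']
        linarith
      have hDatt : att (-C) := ⟨hDfin, hDne, hADne, le_antisymm hDd hDge⟩
      have hCge : (B1.ncard : ℤ) ≤ C.ncard := by
        have := hmin1 _ hDatt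
        rw [hnegC] at this
        exact_mod_cast this
      -- C and the complement of A + B2 are disjoint
      have hdisj : Disjoint C ((A + B2)ᶜ) := by
        rw [Set.disjoint_iff_inter_eq_empty, hCdef, ← Set.compl_union, ← Set.add_union,
          hU, Set.compl_univ]
      have hc2 : ((A + B2)ᶜ).ncard = C.ncard := by
        have h2 : (A + B2).ncard + ((A + B2)ᶜ).ncard = Nat.card G :=
          Set.ncard_add_ncard_compl _ hAB2fin (Set.toFinite _)
        omega
      have hAIsub2 : A + (B1 ∩ B2) ⊆ (C ∪ (A + B2)ᶜ)ᶜ := by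
        rw [Set.compl_union, hCdef, compl_compl, compl_compl]
        exact hAIsub
      have hAIcard : ((A + (B1 ∩ B2)).ncard : ℤ) ≤ (Nat.card G : ℤ) - 2 * C.ncard := by
        have h1 : (A + (B1 ∩ B2)).ncard ≤ ((C ∪ (A + B2)ᶜ)ᶜ).ncard :=
          Set.ncard_le_ncard hAIsub2 (Set.toFinite _)
        have h2 : (C ∪ (A + B2)ᶜ).ncard + ((C ∪ (A + B2)ᶜ)ᶜ).ncard = Nat.card G :=
          Set.ncard_add_ncard_compl _ (Set.toFinite _) (Set.toFinite _)
        have h3 : (C ∪ (A + B2)ᶜ).ncard = C.ncard + ((A + B2)ᶜ).ncard :=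
          Set.ncard_union_eq hdisj (Set.toFinite _) (Set.toFinite _)
        rw [h3, hc2] at h2
        have h1' : ((A + (B1 ∩ B2)).ncard : ℤ) ≤ ((C ∪ (A + B2)ᶜ)ᶜ).ncard := by
          exact_mod_cast h1
        have h2' : (C.ncard : ℤ) + C.ncard + ((C ∪ (A + B2)ᶜ)ᶜ).ncard = Nat.card G := by
          exact_mod_cast h2
        linarith
      linarith
    · -- the good case
      have hUfin : (B1 ∪ B2).Finite := hB1.1.union hB2.1
      have hUne : (B1 ∪ B2).Nonempty := hB1.2.1.mono Set.subset_union_left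
      have hUd : (A.ncard : ℤ) + (B1 ∪ B2).ncard - (A + (B1 ∪ B2)).ncard ≤ d :=
        hub _ hUfin hUne hU
      have e1 : (B1 ∪ B2).ncard + (B1 ∩ B2).ncard = B1.ncard + B2.ncard :=
        Set.ncard_union_add_ncard_inter _ _ hB1.1 hB2.1
      have e2 : A + (B1 ∪ B2) = (A + B1) ∪ (A + B2) := Set.add_union
      have e4 : ((A + B1) ∪ (A + B2)).ncard + ((A + B1) ∩ (A + B2)).ncard
          = (A + B1).ncard + (A + B2).ncard :=
        Set.ncard_union_add_ncard_inter _ _ hAB1fin hAB2fin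
      have e5 : (A + (B1 ∩ B2)).ncard ≤ ((A + B1) ∩ (A + B2)).ncard :=
        Set.ncard_le_ncard hAIsub (hAB1fin.subset Set.inter_subset_left)
      have hge : d ≤ (A.ncard : ℤ) + (B1 ∩ B2).ncard - (A + (B1 ∩ B2)).ncard := by
        rw [e2] at hUd
        have e1' : ((B1 ∪ B2).ncard : ℤ) + (B1 ∩ B2).ncard = B1.ncard + B2.ncard := by
          exact_mod_cast e1
        have e4' : (((A + B1) ∪ (A + B2)).ncard : ℤ) + ((A + B1) ∩ (A + B2)).ncard
            = (A + B1).ncard + (A + B2).ncard := by exact_mod_cast e4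
        have e5' : ((A + (B1 ∩ B2)).ncard : ℤ) ≤ ((A + B1) ∩ (A + B2)).ncard := by
          exact_mod_cast e5
        have hABc' : ((A + B2).ncard : ℤ) = (A + B1).ncard := by exact_mod_cast hABc
        have hB2c' : ((B2.ncard : ℤ)) = B1.ncard := by exact_mod_cast hB2c
        linarith
      have hattI : att (B1 ∩ B2) := ⟨hIfin, hIne, hAIne, le_antisymm hId hge⟩
      have hIeq : B1 ∩ B2 = B1 :=
        Set.eq_of_subset_of_ncard_le Set.inter_subset_left (hmin1 _ hattI) hB1.1
      intro x hx
      have hx2 : x ∈ B2 := by rw [← hIeq] at hx; exact hx.2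
      simp only [hB2def, Set.mem_add, Set.mem_singleton_iff] at hx2
      obtain ⟨y, hy, z, hz, hyz⟩ := hx2
      have hxy : x + b = y := by rw [← hyz, hz]; abel
      rwa [hxy]
  -- B1 is a subgroup
  have hneg : ∀ b ∈ B1, -b ∈ B1 := by
    intro b hb
    have himg : (fun x => x + b) '' B1 ⊆ B1 := by
      rintro _ ⟨x, hx, rfl⟩
      exact key b hb x hx
    have heq : (fun x => x + b) '' B1 = B1 :=
      Set.eq_of_subset_of_ncard_le himg
        (by rw [Set.ncard_image_of_injective _ (add_left_injective b)]) hB1.1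
    have h0' : (0 : G) ∈ (fun x => x + b) '' B1 := by rw [heq]; exact h01
    obtain ⟨x, hx, hxb⟩ := h0'
    have hbx : -b = x := neg_eq_of_add_eq_zero_left hxb
    rwa [hbx]
  refine ⟨{ carrier := B1
            zero_mem' := h01
            add_mem' := fun {x y} hx hy => key y hy x hx
            neg_mem' := fun {x} hx => hneg x hx }, hB1.1, hB1.2.2.1, hB1.2.2.2⟩
end

section
/- (Purification for pairs) Let G be an abelian group, A, B finite nonempty subsets and H < G a finite subgroup such that both (A,B) and (A,H) are critical. Then for every H-coset R with B ∩ R ≠ ∅, one has δ(A, B ∪ R) ≥ δ(A, B), i.e., |A| + |B ∪ R| - |A + (B ∪ R)| ≥ |A| + |B| - |A+B|. -/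
/-!
Write `S = B ∩ R`. Since `A + (B ∪ R) = (A + B) ∪ (A + R)` and `A + S ⊆ (A + B) ∩ (A + R)`,
it suffices to show `|A + R| + |S| ≤ |A + S| + |H|`. The elements `M = (A + R) \ (A + S)` missed
by `A + S` satisfy `M - S ⊆ (A + H) \ A`, a set with fewer than `|H|` elements because `(A, H)` is
critical. So everything rests on a pigeonhole principle for a set `T` inside an `H`-coset:
`|X| + |T| > |H|` forces `|X + T| ≥ |H|`. Dyson e-transforms reduce this to the case where `X` is
invariant under translation by `T - T`; then `|X|` and `|H|` are both multiples of the order of the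
subgroup of `H` stabilising `X`, which contains a translate of `T`.
-/

open Pointwise

section
variable {G : Type*} [AddCommGroup G]

theorem AddSubgroup.card_dvd_ncard_of_add_mem (L : AddSubgroup G) {X : Set G}
    (hX : ∀ l ∈ L, ∀ x ∈ X, l + x ∈ X) : Nat.card L ∣ X.ncard := by
  have hX_preimage : X = QuotientAddGroup.mk ⁻¹' (QuotientAddGroup.mk '' X : Set (G ⧸ L)) := by
    refine (Set.subset_preimage_image _ _).antisymm ?_
    rintro y ⟨x, hx, hxy⟩
    simpa using hX _ (QuotientAddGroup.eq.1 hxy) x hx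
  rw [← Nat.card_coe_set_eq, hX_preimage,
    Nat.card_congr (QuotientAddGroup.preimageMkEquivAddSubgroupProdSet L _), Nat.card_prod]
  exact dvd_mul_right _ _

theorem Set.ncard_add_union_add_ncard_add_inter_le {A B R : Set G} (hA : A.Finite)
    (hB : B.Finite) (hR : R.Finite) :
    (A + (B ∪ R)).ncard + (A + (B ∩ R)).ncard ≤ (A + B).ncard + (A + R).ncard := by
  rw [Set.add_union, ← Set.ncard_union_add_ncard_inter _ _ (hA.add hB) (hA.add hR)]
  gcongr
  · exact (hA.add hB).inter_of_left _
  · exact Set.subset_inter (Set.add_subset_add_left Set.inter_subset_left)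
      (Set.add_subset_add_left Set.inter_subset_right)

section
variable [DecidableEq G]

theorem Finset.card_addSubgroup_le_card_of_add_mem {H : AddSubgroup G} [Finite H]
    {X D : Finset G}
    (hDH : (D : Set G) ⊆ H) (hXD : ∀ d ∈ D, ∀ x ∈ X, d + x ∈ X)
    (h : Nat.card H < X.card + D.card) : Nat.card H ≤ X.card := by
  set L := AddAction.stabilizer G X ⊓ H
  have hDL : (D : Set G) ⊆ L := fun d hd =>
    ⟨AddAction.mem_stabilizer_finset'.2 fun x hx => hXD d hd x hx, hDH hd⟩
  have hLX : Nat.card L ∣ X.card := by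
    simpa using L.card_dvd_ncard_of_add_mem (X := X) fun l hl x hx =>
      AddAction.mem_stabilizer_finset'.1 hl.1 hx
  have hLH : Nat.card L ∣ Nat.card H := AddSubgroup.card_dvd_of_le inf_le_right
  have hDcard : D.card ≤ Nat.card L := by
    have hLfin : (L : Set G).Finite := (Set.toFinite (H : Set G)).subset inf_le_right
    calc D.card = (D : Set G).ncard := (Set.ncard_coe_finset D).symm
      _ ≤ (L : Set G).ncard := Set.ncard_le_ncard hDL hLfin
      _ = Nat.card L := (Nat.card_coe_set_eq _).symm
  obtain ⟨a, ha⟩ := hLX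
  obtain ⟨b, hb⟩ := hLH
  rw [ha, hb] at h ⊢
  have hba : b < a + 1 := Nat.lt_of_mul_lt_mul_left (a := Nat.card L) (by rw [mul_add]; omega)
  exact Nat.mul_le_mul_left _ (by omega)

theorem Finset.card_addSubgroup_le_card_add {H : AddSubgroup G} [Finite H] {X T : Finset G}
    (hT : ∀ t ∈ T, ∀ t' ∈ T, t - t' ∈ H) (hTne : T.Nonempty)
    (h : Nat.card H < X.card + T.card) : Nat.card H ≤ (X + T).card := by
  induction T using Finset.strongInduction generalizing X with
  | H T ih =>
  by_cases hstuck : ∀ x ∈ X, ∀ t ∈ T, ∀ t' ∈ T, x + t - t' ∈ X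
  · obtain ⟨t₀, ht₀⟩ := hTne
    have hD : (T.image (· - t₀)).card = T.card :=
      Finset.card_image_of_injective _ sub_left_injective
    refine (Finset.card_addSubgroup_le_card_of_add_mem (D := T.image (· - t₀)) ?_ ?_
      (hD ▸ h)).trans (Finset.card_le_card_add_right ⟨t₀, ht₀⟩)
    · simp only [Finset.coe_image, Set.image_subset_iff]
      exact fun t ht => hT t ht t₀ ht₀
    · simp only [Finset.mem_image]
      rintro _ ⟨t, ht, rfl⟩ x hx
      convert hstuck x hx t ht t₀ ht₀ using 1
      abel
  · push Not at hstuck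
    obtain ⟨x, hx, t, ht, t', ht', hxtt'⟩ := hstuck
    -- The e-transform at `e = x - t'` keeps `#X + #T`, shrinks `X + T`, and removes `t` from `T`.
    set e := x - t'
    have ht'T : t' ∈ (Finset.addDysonETransform e (X, T)).2 := by
      refine Finset.mem_inter.2 ⟨ht', Finset.mem_vadd_finset.2 ⟨x, hx, ?_⟩⟩
      simp [e]
    have htT : t ∉ (Finset.addDysonETransform e (X, T)).2 := by
      rintro hmem
      obtain ⟨y, hy, hye⟩ := Finset.mem_vadd_finset.1 (Finset.mem_inter.1 hmem).2
      refine hxtt' ?_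
      convert hy using 1
      simp only [e, vadd_eq_add] at hye
      rw [← hye]; abel
    have hcard := Finset.addDysonETransform.card e (X, T)
    simp only at hcard
    refine le_trans ?_ (Finset.card_le_card (Finset.addDysonETransform.subset e (X, T)))
    refine ih (Finset.addDysonETransform e (X, T)).2
      ⟨Finset.inter_subset_left, fun hsub => htT (hsub ht)⟩ ?_ ⟨t', ht'T⟩ (by omega)
    exact fun s hs s' hs' => hT s (Finset.inter_subset_left hs) s' (Finset.inter_subset_left hs')

end

theorem Set.ncard_add_coset_add_ncard_le {H : AddSubgroup G} [Finite H] {A S : Set G} {x : G}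
    (hA : A.Finite) (hSne : S.Nonempty) (hS : S ⊆ x +ᵥ (H : Set G))
    (hcrit : (A + H).ncard < A.ncard + Nat.card H) :
    (A + (x +ᵥ (H : Set G))).ncard + S.ncard ≤ (A + S).ncard + Nat.card H := by
  classical
  set R := x +ᵥ (H : Set G)
  have hRfin : R.Finite := (Set.toFinite (H : Set G)).vadd_set
  have hSfin : S.Finite := hRfin.subset hS
  have hR_sub : ∀ r ∈ R, ∀ r' ∈ R, r - r' ∈ H := by
    rintro _ ⟨h, hh, rfl⟩ _ ⟨h', hh', rfl⟩
    simpa using H.sub_mem hh hh'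
  obtain ⟨M, hM⟩ := ((hA.add hRfin).sdiff (t := A + S)).exists_finset_coe
  obtain ⟨T, hT⟩ := hSfin.neg.exists_finset_coe
  have hMT : ((M + T : Finset G) : Set G) ⊆ (A + H) \ A := by
    rw [Finset.coe_add, hM, hT]
    rintro _ ⟨m, ⟨⟨a, ha, r, hr, rfl⟩, hmS⟩, s, hs, rfl⟩
    refine ⟨⟨a, ha, r + s, ?_, (add_assoc _ _ _).symm⟩, fun has => hmS ?_⟩
    · simpa [sub_eq_add_neg] using hR_sub r hr (-s) (hS hs)
    · exact ⟨a + r + s, has, -s, hs, add_neg_cancel_right _ _⟩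
  have hMcard : M.card + (A + S).ncard = (A + R).ncard := by
    rw [← Set.ncard_coe_finset, hM]
    exact Set.ncard_sdiff_add_ncard_of_subset (Set.add_subset_add_left hS) (hA.add hRfin)
  have hTcard : T.card = S.ncard := by rw [← Set.ncard_coe_finset, hT, Set.ncard_neg]
  have hC : ((A + H) \ A).ncard + A.ncard = (A + H).ncard := by
    refine Set.ncard_sdiff_add_ncard_of_subset ?_ (hA.add (Set.toFinite _))
    exact fun a ha => ⟨a, ha, 0, H.zero_mem, add_zero a⟩
  have hT_sub : ∀ t ∈ T, ∀ t' ∈ T, t - t' ∈ H := by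
    intro t ht t' ht'
    rw [← Finset.mem_coe, hT] at ht ht'
    simpa [neg_add_eq_sub] using hR_sub _ (hS ht') _ (hS ht)
  have hTne : T.Nonempty := by
    rw [← Finset.coe_nonempty, hT]; exact hSne.neg
  by_contra! hlt
  have hMT_card := Finset.card_addSubgroup_le_card_add hT_sub hTne (X := M) (by omega)
  have := Set.ncard_le_ncard hMT ((hA.add (Set.toFinite _)).sdiff)
  rw [Set.ncard_coe_finset] at this
  omega

end

theorem stmt_12_general {G : Type*} [AddCommGroup G]
    (A B : Set G) (hAfin : A.Finite) (hBfin : B.Finite)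
    (H : AddSubgroup G) (hHfin : (H : Set G).Finite)
    (hcritAH : (A + (H : Set G)).ncard < A.ncard + (H : Set G).ncard)
    (x : G) (R : Set G) (hR : R = x +ᵥ (H : Set G)) (hBR : (B ∩ R).Nonempty) :
    (A.ncard : ℤ) + (B ∪ R).ncard - (A + (B ∪ R)).ncard
      ≥ (A.ncard : ℤ) + B.ncard - (A + B).ncard := by
  have : Finite H := hHfin.to_subtype
  have hH : Nat.card H = (H : Set G).ncard := Nat.card_coe_set_eq _
  subst hR
  have hkey := Set.ncard_add_coset_add_ncard_le hAfin hBR Set.inter_subset_right (hH ▸ hcritAH)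
  have hRcard := Set.ncard_vadd_set x (H : Set G)
  have hRfin := hHfin.vadd_set (a := x)
  have hsub := Set.ncard_add_union_add_ncard_add_inter_le hAfin hBfin hRfin
  have hBR_card := Set.ncard_union_add_ncard_inter _ _ hBfin hRfin
  omega

theorem stmt_12 {G : Type*} [AddCommGroup G]
    (A B : Set G) (hAfin : A.Finite) (hBfin : B.Finite)
    (hA : A.Nonempty) (hB : B.Nonempty)
    (H : AddSubgroup G) (hHfin : (H : Set G).Finite)
    (hcritAB : (A + B).ncard < A.ncard + B.ncard)
    (hcritAH : (A + (H : Set G)).ncard < A.ncard + (H : Set G).ncard)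
    (x : G) (R : Set G) (hR : R = x +ᵥ (H : Set G)) (hBR : (B ∩ R).Nonempty) :
    (A.ncard : ℤ) + (B ∪ R).ncard - (A + (B ∪ R)).ncard
      ≥ (A.ncard : ℤ) + B.ncard - (A + B).ncard :=
  stmt_12_general A B hAfin hBfin H hHfin hcritAH x R hR hBR
end

section
/- (Purification for trios) Let G be a finite abelian group, (A,B,C) a critical trio, H ≤ G a subgroup with (A,H) critical, and R an H-coset with ∅ ≠ R ∩ B ≠ R. Set S = G \ (-(A+R)). Then (A, B ∪ R, C ∩ S) is a trio and |A| + |B ∪ R| + |C ∩ S| ≥ |A| + |B| + |C|. -/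
open Pointwise

section Aux

variable {G : Type*} [AddCommGroup G] [Fintype G]

private lemma add_vadd_comm' (A X : Set G) (h : G) : A + (h +ᵥ X) = h +ᵥ (A + X) := by
  ext g
  simp only [Set.mem_add, Set.mem_vadd_set, vadd_eq_add]
  constructor
  · rintro ⟨a, ha, -, ⟨y, hy, rfl⟩, rfl⟩
    exact ⟨a + y, ⟨a, ha, y, hy, rfl⟩, by abel⟩
  · rintro ⟨-, ⟨a, ha, y, hy, rfl⟩, rfl⟩
    exact ⟨a, ha, h + y, ⟨y, hy, rfl⟩, by abel⟩

private lemma ncard_add_coe_addSubgroup (A : Set G) (S : AddSubgroup G) :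
    (A + (S : Set G)).ncard =
      ((QuotientAddGroup.mk (s := S)) '' A).ncard * (S : Set G).ncard := by
  have hpre : A + (S : Set G)
      = (QuotientAddGroup.mk (s := S)) ⁻¹' ((QuotientAddGroup.mk (s := S)) '' A) := by
    ext g
    simp only [Set.mem_add, Set.mem_preimage, Set.mem_image, SetLike.mem_coe]
    constructor
    · rintro ⟨a, ha, s, hs, rfl⟩
      exact ⟨a, ha, ((QuotientAddGroup.eq).2 (by simpa using hs)).symm⟩
    · rintro ⟨a, ha, hq⟩
      refine ⟨a, ha, -a + g, (QuotientAddGroup.eq).1 hq, by abel⟩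
  rw [hpre]
  have hcongr := Nat.card_congr
    (QuotientAddGroup.preimageMkEquivAddSubgroupProdSet S ((QuotientAddGroup.mk (s := S)) '' A))
  rw [Nat.card_prod] at hcongr
  rw [← Nat.card_coe_set_eq, hcongr, mul_comm, ← Nat.card_coe_set_eq,
    ← Nat.card_coe_set_eq]
  rfl

private lemma L2 (A : Set G) {K H : AddSubgroup G} (hKH : K ≤ H)
    (hA : (A + (H : Set G)).ncard < A.ncard + (H : Set G).ncard) :
    (A + (H : Set G)).ncard + (K : Set G).ncard
      ≤ (A + (K : Set G)).ncard + (H : Set G).ncard := by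
  have hH := ncard_add_coe_addSubgroup A H
  have hK := ncard_add_coe_addSubgroup A K
  set m := ((QuotientAddGroup.mk (s := H)) '' A).ncard with hm
  set n := ((QuotientAddGroup.mk (s := K)) '' A).ncard with hn
  have hdvd : (K : Set G).ncard ∣ (H : Set G).ncard := by
    have := AddSubgroup.card_dvd_of_le hKH
    simpa [← Nat.card_coe_set_eq] using this
  have hKpos : 0 < (K : Set G).ncard :=
    Set.ncard_pos (Set.toFinite _) |>.2 ⟨0, K.zero_mem⟩
  have hHpos : 0 < (H : Set G).ncard :=
    Set.ncard_pos (Set.toFinite _) |>.2 ⟨0, H.zero_mem⟩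
  have hAsub : A ⊆ A + (K : Set G) := fun a ha => ⟨a, ha, 0, K.zero_mem, add_zero a⟩
  have hAle : A.ncard ≤ n * (K : Set G).ncard := by
    rw [← hK]; exact Set.ncard_le_ncard hAsub (Set.toFinite _)
  rcases Nat.eq_zero_or_pos m with h0 | hm1
  · rw [hH, h0, zero_mul]
    simpa using le_trans (Nat.le_of_dvd hHpos hdvd) (Nat.le_add_left _ _)
  · obtain ⟨m', hm'⟩ : ∃ m', m = m' + 1 := ⟨m - 1, by omega⟩
    have hcrit' : m' * (H : Set G).ncard < A.ncard := by
      have h5 : m * (H : Set G).ncard < A.ncard + (H : Set G).ncard := by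
        rw [← hH]; exact hA
      rw [hm', add_one_mul] at h5
      omega
    have h1 : m' * (H : Set G).ncard < n * (K : Set G).ncard := lt_of_lt_of_le hcrit' hAle
    obtain ⟨q, hq⟩ : (K : Set G).ncard ∣ m' * (H : Set G).ncard := hdvd.mul_left m'
    have hqn : q < n := by
      rw [hq, mul_comm n _] at h1
      exact Nat.lt_of_mul_lt_mul_left h1
    have h3 : m' * (H : Set G).ncard + (K : Set G).ncard ≤ n * (K : Set G).ncard := by
      rw [hq]
      calc (K : Set G).ncard * q + (K : Set G).ncard = (K : Set G).ncard * (q + 1) := by ring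
        _ ≤ (K : Set G).ncard * n := Nat.mul_le_mul_left _ (by omega)
        _ = n * (K : Set G).ncard := mul_comm _ _
    rw [hH, hK, hm', add_one_mul]
    omega

private lemma L1core (A : Set G) (H : AddSubgroup G)
    (hA : (A + (H : Set G)).ncard < A.ncard + (H : Set G).ncard)
    {T : Set G} (hT : T.Nonempty) (hTH : T ⊆ (H : Set G)) :
    (A + (H : Set G)).ncard + T.ncard ≤ (A + T).ncard + (H : Set G).ncard := by
  classical
  set φ : Set G → ℤ := fun U => ((A + U).ncard : ℤ) + ((H : Set G).ncard : ℤ) - (U.ncard : ℤ)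
    with hφ
  set fam : Set (Set G) := {U | U.Nonempty ∧ U ⊆ (H : Set G)} with hfam
  have hfamfin : fam.Finite :=
    Set.Finite.subset (Set.toFinite (H : Set G)).finite_subsets (fun U hU => hU.2)
  have hTfam : T ∈ fam := ⟨hT, hTH⟩
  obtain ⟨T₁, hT₁fam, hT₁min⟩ := Set.exists_min_image fam φ hfamfin ⟨T, hTfam⟩
  set fam2 : Set (Set G) := {U | U ∈ fam ∧ φ U = φ T₁} with hfam2
  have hfam2fin : fam2.Finite := hfamfin.subset (fun U hU => hU.1)
  obtain ⟨T₀, hT₀f2, hT₀max⟩ :=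
    Set.exists_max_image fam2 (fun U => U.ncard) hfam2fin ⟨T₁, hT₁fam, rfl⟩
  obtain ⟨hT₀fam, hT₀φ⟩ := hT₀f2
  have hmin : ∀ U ∈ fam, φ T₀ ≤ φ U := fun U hU => by rw [hT₀φ]; exact hT₁min U hU
  -- φ is invariant under translation by elements
  have hφvadd : ∀ (h : G) (U : Set G), φ (h +ᵥ U) = φ U := by
    intro h U
    simp only [hφ, add_vadd_comm' A U h, Set.ncard_vadd_set]
  -- dichotomy
  have key : ∀ h : G, h ∈ H → (T₀ ∩ (h +ᵥ T₀)).Nonempty → h +ᵥ T₀ = T₀ := by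
    intro h hh hne
    set T' : Set G := h +ᵥ T₀ with hT'
    have hT'fam : T' ∈ fam := by
      refine ⟨hT₀fam.1.vadd_set, ?_⟩
      rintro g ⟨y, hy, rfl⟩
      exact H.add_mem hh (hT₀fam.2 hy)
    have hT'card : T'.ncard = T₀.ncard := Set.ncard_vadd_set _ _
    have hT'φ : φ T' = φ T₀ := hφvadd h T₀
    have hUfam : T₀ ∪ T' ∈ fam := ⟨hT₀fam.1.mono Set.subset_union_left,
      Set.union_subset hT₀fam.2 hT'fam.2⟩
    have hIfam : T₀ ∩ T' ∈ fam := ⟨hne, fun g hg => hT₀fam.2 hg.1⟩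
    have hcards : (T₀ ∪ T').ncard + (T₀ ∩ T').ncard = T₀.ncard + T'.ncard :=
      Set.ncard_union_add_ncard_inter _ _ (Set.toFinite _) (Set.toFinite _)
    have haddU : A + (T₀ ∪ T') = (A + T₀) ∪ (A + T') := Set.add_union ..
    have haddI : A + (T₀ ∩ T') ⊆ (A + T₀) ∩ (A + T') :=
      Set.subset_inter (Set.add_subset_add_left Set.inter_subset_left)
        (Set.add_subset_add_left Set.inter_subset_right)
    have hcards2 : (A + (T₀ ∪ T')).ncard + (A + (T₀ ∩ T')).ncard
        ≤ (A + T₀).ncard + (A + T').ncard := by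
      have e1 : ((A + T₀) ∪ (A + T')).ncard + ((A + T₀) ∩ (A + T')).ncard
          = (A + T₀).ncard + (A + T').ncard :=
        Set.ncard_union_add_ncard_inter _ _ (Set.toFinite _) (Set.toFinite _)
      have e2 : (A + (T₀ ∩ T')).ncard ≤ ((A + T₀) ∩ (A + T')).ncard :=
        Set.ncard_le_ncard haddI (Set.toFinite _)
      rw [haddU]
      omega
    have hsub : φ (T₀ ∪ T') + φ (T₀ ∩ T') ≤ φ T₀ + φ T' := by
      simp only [hφ]
      push_cast
      have := hcards
      have := hcards2
      omega
    have hIge : φ T₀ ≤ φ (T₀ ∩ T') := hmin _ hIfam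
    have hUge : φ T₀ ≤ φ (T₀ ∪ T') := hmin _ hUfam
    have hUeq : φ (T₀ ∪ T') = φ T₀ := by omega
    have hUcard : (T₀ ∪ T').ncard ≤ T₀.ncard := by
      have := hT₀max (T₀ ∪ T') ⟨hUfam, by rw [hUeq, hT₀φ]⟩
      simpa using this
    have hUT : T₀ = T₀ ∪ T' :=
      Set.eq_of_subset_of_ncard_le Set.subset_union_left hUcard (Set.toFinite _)
    have hT'sub : T' ⊆ T₀ := by rw [hUT]; exact Set.subset_union_right
    exact Set.eq_of_subset_of_ncard_le hT'sub (by omega) (Set.toFinite _)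
  -- T₀ is a coset of its stabilizer
  obtain ⟨t, ht⟩ := hT₀fam.1
  set K : AddSubgroup G := AddAction.stabilizer G T₀ with hK
  have hKH : K ≤ H := by
    intro k hk
    have hkv : k +ᵥ T₀ = T₀ := AddAction.mem_stabilizer_iff.mp hk
    have : k + t ∈ T₀ := by
      rw [← hkv]; exact Set.vadd_mem_vadd_set ht
    have h1 := hT₀fam.2 this
    have h2 := hT₀fam.2 ht
    simpa using H.sub_mem h1 h2
  have hcoset : T₀ = t +ᵥ (K : Set G) := by
    ext u
    constructor
    · intro hu
      have hd : u - t ∈ H := H.sub_mem (hT₀fam.2 hu) (hT₀fam.2 ht)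
      have hne : (T₀ ∩ ((u - t) +ᵥ T₀)).Nonempty :=
        ⟨u, hu, ⟨t, ht, by simp [vadd_eq_add]⟩⟩
      have hst : u - t ∈ K := AddAction.mem_stabilizer_iff.mpr (key _ hd hne)
      exact ⟨u - t, hst, by simp [vadd_eq_add]⟩
    · rintro ⟨k, hk, rfl⟩
      have hkv : k +ᵥ T₀ = T₀ := AddAction.mem_stabilizer_iff.mp hk
      have : k + t ∈ T₀ := by rw [← hkv]; exact Set.vadd_mem_vadd_set ht
      simpa [vadd_eq_add, add_comm] using this
  have hT₀card : T₀.ncard = (K : Set G).ncard := by rw [hcoset, Set.ncard_vadd_set]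
  have hAT₀card : (A + T₀).ncard = (A + (K : Set G)).ncard := by
    rw [hcoset, add_vadd_comm', Set.ncard_vadd_set]
  have hL2 := L2 A hKH hA
  have hfinal : ((A + (H : Set G)).ncard : ℤ) ≤ φ T₀ := by
    simp only [hφ, hAT₀card, hT₀card]
    push_cast
    omega
  have hTφ := hmin T hTfam
  have : ((A + (H : Set G)).ncard : ℤ) ≤ φ T := le_trans hfinal hTφ
  simp only [hφ] at this
  push_cast at this
  omega

private lemma L1 (A : Set G) (H : AddSubgroup G) (x : G)
    (hA : (A + (H : Set G)).ncard < A.ncard + (H : Set G).ncard)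
    {T : Set G} (hT : T.Nonempty) (hTR : T ⊆ x +ᵥ (H : Set G)) :
    (A + (x +ᵥ (H : Set G))).ncard + T.ncard ≤ (A + T).ncard + (x +ᵥ (H : Set G)).ncard := by
  set T' : Set G := (-x) +ᵥ T with hT'
  have hT'ne : T'.Nonempty := hT.vadd_set
  have hT'H : T' ⊆ (H : Set G) := by
    rintro g ⟨y, hy, rfl⟩
    obtain ⟨h, hh, rfl⟩ := hTR hy
    simpa [vadd_eq_add] using hh
  have hxT' : x +ᵥ T' = T := by
    rw [hT', vadd_vadd]
    simp
  have h1 : (A + T).ncard = (A + T').ncard := by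
    rw [← hxT', add_vadd_comm', Set.ncard_vadd_set]
  have h2 : (A + (x +ᵥ (H : Set G))).ncard = (A + (H : Set G)).ncard := by
    rw [add_vadd_comm', Set.ncard_vadd_set]
  have h3 : T.ncard = T'.ncard := by rw [← hxT', Set.ncard_vadd_set]
  have h4 : (x +ᵥ (H : Set G)).ncard = (H : Set G).ncard := Set.ncard_vadd_set _ _
  rw [h1, h2, h3, h4]
  exact L1core A H hA hT'ne hT'H

end Aux

theorem stmt_13 {G : Type*} [AddCommGroup G] [Fintype G]
    (A B C : Set G)
    (h0 : (0 : G) ∉ A + B + C)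
    (hcrit : A.ncard + B.ncard + C.ncard > Fintype.card G)
    (H : AddSubgroup G)
    (hcritAH : (A + (H : Set G)).ncard < A.ncard + (H : Set G).ncard)
    (x : G) (R : Set G) (hR : R = x +ᵥ (H : Set G))
    (hBR : (R ∩ B).Nonempty) (hBRne : R ∩ B ≠ R)
    (S : Set G) (hS : S = (-(A + R))ᶜ) :
    (0 : G) ∉ A + (B ∪ R) + (C ∩ S) ∧
    A.ncard + (B ∪ R).ncard + (C ∩ S).ncard ≥ A.ncard + B.ncard + C.ncard := by
  classical
  constructor
  · -- trio property
    rintro ⟨p, ⟨a, ha, y, hy, rfl⟩, c, ⟨hcC, hcS⟩, hsum⟩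
    rcases hy with hyB | hyR
    · exact h0 ⟨a + y, ⟨a, ha, y, hyB, rfl⟩, c, hcC, hsum⟩
    · rw [hS] at hcS
      exact hcS (Set.mem_neg.mpr ⟨a, ha, y, hyR, eq_neg_of_add_eq_zero_left hsum⟩)
  · -- cardinality
    set T : Set G := R ∩ B with hT
    have hTne : T.Nonempty := hBR
    have hTB : T ⊆ B := Set.inter_subset_right
    have hTR : T ⊆ R := Set.inter_subset_left
    -- C \ S ⊆ -(A+R) \ -(A+T)
    have key1 : C \ S ⊆ (-(A + R)) \ (-(A + T)) := by
      rintro c ⟨hcC, hcS⟩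
      rw [hS] at hcS
      refine ⟨by simpa using hcS, ?_⟩
      intro hc
      obtain ⟨a, ha, u, hu, huc⟩ := Set.mem_neg.mp hc
      have huc' : a + u = -c := huc
      exact h0 ⟨a + u, ⟨a, ha, u, hTB hu, rfl⟩, c, hcC, by show a + u + c = 0; rw [huc', neg_add_cancel]⟩
    have hsubT : -(A + T) ⊆ -(A + R) :=
      Set.neg_subset_neg.mpr (Set.add_subset_add_left hTR)
    have hdiffcard : ((-(A + R)) \ (-(A + T))).ncard + (A + T).ncard = (A + R).ncard := by
      have := Set.ncard_diff_add_ncard_of_subset hsubT (Set.toFinite _)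
      rwa [Set.ncard_neg, Set.ncard_neg] at this
    have hdiff2 : (C \ S).ncard + (A + T).ncard ≤ (A + R).ncard := by
      have := Set.ncard_le_ncard key1 (Set.toFinite _)
      omega
    have hL1 : (A + R).ncard + T.ncard ≤ (A + T).ncard + R.ncard := by
      rw [hR]
      exact L1 A H x hcritAH hTne (hR ▸ hTR)
    have hB : (B ∪ R).ncard + T.ncard = B.ncard + R.ncard := by
      rw [hT, Set.inter_comm]
      exact Set.ncard_union_add_ncard_inter _ _ (Set.toFinite _) (Set.toFinite _)
    have hC : (C ∩ S).ncard + (C \ S).ncard = C.ncard :=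
      Set.ncard_inter_add_ncard_diff_eq_ncard _ _ (Set.toFinite _)
    omega
end

section
/- Let G be an abelian group, B ⊆ G finite, and g ∈ G. Set B' = B ∩ (g+B) and B'' = B ∪ (g+B). Then for any finite A ⊆ G, |A+B'| + |A+B''| ≤ |A + B| + |A + (g+B)| = 2|A+B|, and consequently δ(A,B') + δ(A,B'') ≥ 2δ(A,B), where δ(A,X) = |A|+|X|-|A+X|. -/
open Pointwise

theorem stmt_15 {G : Type*} [AddCommGroup G]
    (A B : Set G) (hAfin : A.Finite) (hBfin : B.Finite) (g : G) :
    (A + (B ∩ (g +ᵥ B))).ncard + (A + (B ∪ (g +ᵥ B))).ncard ≤ 2 * (A + B).ncard ∧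
    ((A.ncard : ℤ) + (B ∩ (g +ᵥ B)).ncard - (A + (B ∩ (g +ᵥ B))).ncard)
      + ((A.ncard : ℤ) + (B ∪ (g +ᵥ B)).ncard - (A + (B ∪ (g +ᵥ B))).ncard)
      ≥ 2 * ((A.ncard : ℤ) + B.ncard - (A + B).ncard) := by
  have hgB : (g +ᵥ B).Finite := hBfin.vadd_set
  have hAB : (A + B).Finite := hAfin.add hBfin
  have hAgB : (A + (g +ᵥ B)).Finite := hAfin.add hgB
  have hunion : A + (B ∪ (g +ᵥ B)) = (A + B) ∪ (A + (g +ᵥ B)) := Set.add_union ..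
  have hinter : A + (B ∩ (g +ᵥ B)) ⊆ (A + B) ∩ (A + (g +ᵥ B)) := Set.add_inter_subset ..
  have htrans : A + (g +ᵥ B) = g +ᵥ (A + B) := by
    ext x
    simp only [Set.mem_add, Set.mem_vadd_set, vadd_eq_add]
    constructor
    · rintro ⟨a, ha, _, ⟨b, hb, rfl⟩, rfl⟩
      exact ⟨a + b, ⟨a, ha, b, hb, rfl⟩, by abel⟩
    · rintro ⟨_, ⟨a, ha, b, hb, rfl⟩, rfl⟩
      exact ⟨a, ha, g + b, ⟨b, hb, rfl⟩, by abel⟩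
  have hcard_gB : (A + (g +ᵥ B)).ncard = (A + B).ncard := by
    rw [htrans, Set.ncard_vadd_set]
  have hBcard : (B ∩ (g +ᵥ B)).ncard + (B ∪ (g +ᵥ B)).ncard = 2 * B.ncard := by
    have := Set.ncard_union_add_ncard_inter B (g +ᵥ B) hBfin hgB
    have h2 : (g +ᵥ B).ncard = B.ncard := Set.ncard_vadd_set g B
    omega
  have key : (A + (B ∩ (g +ᵥ B))).ncard + (A + (B ∪ (g +ᵥ B))).ncard ≤ 2 * (A + B).ncard := by
    have h1 : (A + (B ∩ (g +ᵥ B))).ncard ≤ ((A + B) ∩ (A + (g +ᵥ B))).ncard :=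
      Set.ncard_le_ncard hinter (hAB.inter_of_left _)
    have h2 : (A + (B ∪ (g +ᵥ B))).ncard = ((A + B) ∪ (A + (g +ᵥ B))).ncard := by
      rw [hunion]
    have h3 := Set.ncard_union_add_ncard_inter (A + B) (A + (g +ᵥ B)) hAB hAgB
    omega
  refine ⟨key, ?_⟩
  have := hBcard
  omega
end

section
/- Let p be prime and let (A,B,C) be a triple of nonempty subsets of Z/pZ with 0 ∉ A+B+C and |A|+|B|+|C| > p. Then either min{|A|,|B|,|C|} = 1, or A, B, and C are all arithmetic progressions with a common difference. -/
open Pointwise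

/-- `S` is an arithmetic progression with difference `d`. -/
def IsAP {G : Type*} [AddCommGroup G] (S : Set G) (d : G) : Prop :=
  ∃ (x : G) (k : ℕ), S = (fun i : ℕ => x + i • d) '' {i | i ≤ k}

/-!
By Cauchy–Davenport, such a triple has `|A| + |B| + |C| = p + 1` and `|A + B| = |A| + |B| - 1`.
If `A` is an arithmetic progression with difference `d ≠ 0`, then `A ⊇ A' + {0, d}` with
`|A'| ≥ |A| - 1`, and Cauchy–Davenport for `(B + {0, d}) + A' ⊆ B + A` gives
`|B ∪ (B + d)| ≤ |B| + 1`, which forces `B` to be a progression with difference `d`. So it is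
enough to show that a smallest set `A` is a progression, which is clear when `|A| = 2`.

For `3 ≤ |A| ≤ |B| ≤ |C|`, if some `e` has `2 ≤ |B ∩ (e + C)| < |B|`, the Dyson e-transform
`(C ∪ (B - e), B ∩ (e + C))` of `(C, B)` keeps the triple critical and enlarges `C`, so we conclude
by induction on `p - |C|`. Otherwise every translate `e + C` meets `B` in at most one point or
contains `B`. As `|B| |C| > p`, some translate contains `B`; the set of such `e` is then invariant
under every `t ≠ 0` with `|B ∩ (t + B)| ≥ 2`, so (as `C ≠ ZMod p`) no such `t` exists. Three
translates of `B` inside `A + B` then give `|A + B| ≥ 3 |B| - 3 > |A| + |B| - 1`.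
-/

open Finset

section AddGroup

variable {G : Type*} [AddGroup G] [DecidableEq G] {X Y Z : Finset G}

lemma Finset.sum_card_inter_vadd [Fintype G] (Y Z : Finset G) :
    ∑ e : G, #(Y ∩ (e +ᵥ Z)) = #Y * #Z := by
  simp_rw [card_inter_vadd, ← card_neg Z, ← card_product]
  exact (card_eq_sum_card_fiberwise fun _ _ => mem_univ _).symm

lemma Finset.exists_subset_vadd_of_card_lt [Fintype G] (hYZ : Fintype.card G < #Y * #Z)
    (hstuck : ∀ e : G, 2 ≤ #(Y ∩ (e +ᵥ Z)) → Y ⊆ e +ᵥ Z) : ∃ e : G, Y ⊆ e +ᵥ Z := by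
  by_contra! hnone
  have hle : ∀ e : G, #(Y ∩ (e +ᵥ Z)) ≤ 1 := fun e => by
    by_contra! h; exact hnone e (hstuck e h)
  have := (sum_card_inter_vadd Y Z).symm.trans_le (sum_le_sum fun e _ => hle e)
  simp only [sum_const, card_univ, smul_eq_mul, mul_one] at this
  omega

lemma Finset.three_mul_card_le_card_add_add_three (hX : 3 ≤ #X)
    (hY : ∀ t : G, t ≠ 0 → #(Y ∩ (t +ᵥ Y)) ≤ 1) : 3 * #Y ≤ #(X + Y) + 3 := by
  obtain ⟨X', hX'X, hX'⟩ := exists_subset_card_eq hX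
  obtain ⟨a, b, c, hab, hac, hbc, rfl⟩ := card_eq_three.1 hX'
  have hpair : ∀ u v : G, u ≠ v → #((u +ᵥ Y) ∩ (v +ᵥ Y)) ≤ 1 := fun u v huv => by
    rw [← card_vadd_finset (-u), vadd_finset_inter, neg_vadd_vadd, vadd_vadd]
    exact hY _ fun h => huv (neg_add_eq_zero.1 h)
  have hsub : (a +ᵥ Y) ∪ (b +ᵥ Y) ∪ (c +ᵥ Y) ⊆ X + Y :=
    union_subset (union_subset (vadd_finset_subset_add (hX'X (by simp)))
      (vadd_finset_subset_add (hX'X (by simp)))) (vadd_finset_subset_add (hX'X (by simp)))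
  have h₁ := card_union_add_card_inter (a +ᵥ Y) (b +ᵥ Y)
  have h₂ := card_union_add_card_inter ((a +ᵥ Y) ∪ (b +ᵥ Y)) (c +ᵥ Y)
  have h₃ : #(((a +ᵥ Y) ∪ (b +ᵥ Y)) ∩ (c +ᵥ Y)) ≤
      #((a +ᵥ Y) ∩ (c +ᵥ Y)) + #((b +ᵥ Y) ∩ (c +ᵥ Y)) := by
    rw [union_inter_distrib_right]
    exact card_union_le _ _
  simp only [card_vadd_finset] at h₁ h₂
  have := card_le_card hsub
  have := hpair a b hab
  have := hpair a c hac
  have := hpair b c hbc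
  omega

end AddGroup

section IsAP

variable {G : Type*} [AddCommGroup G] {C : Finset G} {d : G}

lemma IsAP.ne_zero (hC : IsAP (C : Set G) d) (hC2 : 2 ≤ #C) : d ≠ 0 := by
  rintro rfl
  obtain ⟨x, k, hk⟩ := hC
  have hsub : C ⊆ {x} := fun c hc => by
    have : c ∈ (C : Set G) := hc
    simp_all
  have := card_le_card hsub
  rw [card_singleton] at this
  omega

lemma IsAP.exists_add_pair_subset [DecidableEq G] (hC : IsAP (C : Set G) d) (hC2 : 2 ≤ #C) :
    ∃ C' : Finset G, C'.Nonempty ∧ #C ≤ #C' + 1 ∧ C' + {0, d} ⊆ C := by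
  obtain ⟨x, k, hk⟩ := hC
  have mem : ∀ c, c ∈ C ↔ ∃ i ≤ k, x + i • d = c := fun c => by
    rw [← mem_coe, hk]; rfl
  set C' := (range k).image fun i : ℕ => x + i • d
  have hcard : #C ≤ #C' + 1 := by
    refine (card_le_card fun c hc => ?_).trans (card_insert_le (x + k • d) C')
    obtain ⟨i, hi, rfl⟩ := (mem c).1 hc
    rcases Nat.lt_or_eq_of_le hi with hi | rfl
    · exact mem_insert_of_mem (mem_image_of_mem _ (mem_range.2 hi))
    · exact mem_insert_self _ _
  refine ⟨C', card_pos.1 (by omega), hcard, fun y hy => ?_⟩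
  obtain ⟨c, hc, e, he, rfl⟩ := mem_add.1 hy
  obtain ⟨i, hi, rfl⟩ := mem_image.1 hc
  rw [mem_range] at hi
  rcases mem_insert.1 he with rfl | he
  · exact (mem _).2 ⟨i, hi.le, (add_zero _).symm⟩
  · rw [mem_singleton.1 he]
    exact (mem _).2 ⟨i + 1, hi, by rw [succ_nsmul, add_assoc]⟩

lemma Finset.exists_isAP_of_card_eq_two [DecidableEq G] {A : Finset G} (hA : #A = 2) :
    ∃ d, IsAP (A : Set G) d := by
  obtain ⟨u, v, -, rfl⟩ := card_eq_two.1 hA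
  refine ⟨v - u, u, 1, Set.ext fun y => ?_⟩
  simp [Nat.le_one_iff_eq_zero_or_eq_one, or_and_right, exists_or, eq_comm]

end IsAP

namespace ZMod

variable {p : ℕ}

section Prime

variable [Fact p.Prime] {S Y Z : Finset (ZMod p)} {d e t w : ZMod p}

lemma exists_lt_eq_add_nsmul (hd : d ≠ 0) (x y : ZMod p) : ∃ n < p, y = x + n • d :=
  ⟨((y - x) / d).val, val_lt _, by
    rw [nsmul_eq_mul, natCast_zmod_val, div_mul_cancel₀ _ hd, add_sub_cancel]⟩

lemma nsmul_ne_zero_of_lt (hd : d ≠ 0) {n : ℕ} (hn : n ≠ 0) (hnp : n < p) : n • d ≠ 0 := by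
  rw [nsmul_eq_mul]
  exact mul_ne_zero (by rwa [Ne, natCast_eq_zero_iff, Nat.dvd_iff_mod_eq_zero,
    Nat.mod_eq_of_lt hnp]) hd

lemma forall_of_add_closed {P : ZMod p → Prop} (hd : d ≠ 0) (hx : P w)
    (hP : ∀ y, P y → P (y + d)) (y : ZMod p) : P y := by
  obtain ⟨n, -, rfl⟩ := exists_lt_eq_add_nsmul hd w y
  induction n with
  | zero => simpa using hx
  | succ n ih => rw [succ_nsmul, ← add_assoc]; exact hP _ ih

lemma isAP_of_forall_sub_mem (hd : d ≠ 0) (hw : w ∈ S) (hstep : ∀ t ∈ S, t ≠ w → t - d ∈ S) :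
    IsAP (S : Set (ZMod p)) d := by
  have walk : ∀ m < p, w + m • d ∈ S → ∀ i ≤ m, w + i • d ∈ S := by
    intro m
    induction m with
    | zero => intro _ _ i hi; simpa [Nat.le_zero.1 hi] using hw
    | succ m ih =>
      intro hm hmem i hi
      rcases Nat.lt_or_eq_of_le hi with hi | rfl
      · refine ih (by omega) ?_ i (by omega)
        have hne : w + (m + 1) • d ≠ w := by
          simpa using nsmul_ne_zero_of_lt hd m.succ_ne_zero hm
        have := hstep _ hmem hne
        rwa [succ_nsmul, ← add_assoc, add_sub_cancel_right] at this
      · exact hmem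
  set I := (range p).filter fun i => w + i • d ∈ S
  have hI : I.Nonempty := ⟨0, mem_filter.2 ⟨mem_range.2 (Fact.out : p.Prime).pos, by simpa⟩⟩
  refine ⟨w, I.max' hI, Set.ext fun y => ⟨fun hy => ?_, ?_⟩⟩
  · obtain ⟨n, hn, rfl⟩ := exists_lt_eq_add_nsmul hd w y
    exact ⟨n, le_max' I n (mem_filter.2 ⟨mem_range.2 hn, hy⟩), rfl⟩
  · rintro ⟨i, hi, rfl⟩
    have hmax := max'_mem I hI
    simp only [I, mem_filter, mem_range] at hmax
    exact walk _ hmax.1 hmax.2 i hi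

lemma isAP_of_card_add_pair_le (hd : d ≠ 0) (hS : S.Nonempty) (hSu : S ≠ univ)
    (h : #(S + {0, d}) ≤ #S + 1) : IsAP (S : Set (ZMod p)) d := by
  obtain ⟨w, hwS, hw⟩ : ∃ w ∈ S, w - d ∉ S := by
    by_contra! hcl
    obtain ⟨x, hx⟩ := hS
    exact hSu (eq_univ_of_forall (forall_of_add_closed (neg_ne_zero.2 hd) hx
      fun y hy => by simpa [sub_eq_add_neg] using hcl y hy))
  refine isAP_of_forall_sub_mem hd hwS fun t ht htw => ?_
  by_contra htd
  have not_mem_image : ∀ u, u - d ∉ S → u ∉ S.image (· + d) := by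
    intro u hu hmem
    obtain ⟨s, hs, rfl⟩ := mem_image.1 hmem
    exact hu (by simpa using hs)
  have hsub : insert t (insert w (S.image (· + d))) ⊆ S + {0, d} := by
    refine insert_subset (mem_add.2 ⟨t, ht, 0, by simp, add_zero t⟩)
      (insert_subset (mem_add.2 ⟨w, hwS, 0, by simp, add_zero w⟩) ?_)
    intro x hx
    obtain ⟨s, hs, rfl⟩ := mem_image.1 hx
    exact mem_add.2 ⟨s, hs, d, by simp, rfl⟩
  have := card_le_card hsub
  rw [card_insert_of_notMem (by simpa [htw] using not_mem_image t htd),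
    card_insert_of_notMem (not_mem_image w hw),
    card_image_of_injective _ (add_left_injective d)] at this
  omega

lemma card_inter_vadd_le_one (hZ : Z ≠ univ)
    (hstuck : ∀ e : ZMod p, 2 ≤ #(Y ∩ (e +ᵥ Z)) → Y ⊆ e +ᵥ Z) (he : Y ⊆ e +ᵥ Z) (ht : t ≠ 0) :
    #(Y ∩ (t +ᵥ Y)) ≤ 1 := by
  by_contra! h2
  have hshift : ∀ e, Y ⊆ e +ᵥ Z → Y ⊆ (e + t) +ᵥ Z := fun e he => by
    refine hstuck _ (h2.trans_le (card_le_card (inter_subset_inter_left ?_)))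
    rw [add_comm, ← vadd_vadd]
    exact vadd_finset_subset_vadd_finset he
  have hall := forall_of_add_closed (P := fun e => Y ⊆ e +ᵥ Z) ht he hshift
  obtain ⟨y, hy⟩ := (card_pos.1 (by omega)).mono (inter_subset_left (s₁ := Y) (s₂ := t +ᵥ Y))
  refine hZ (eq_univ_of_forall fun z => ?_)
  obtain ⟨z', hz', hzz'⟩ := mem_vadd_finset.1 (hall (y - z) hy)
  rw [vadd_eq_add, sub_add_eq_add_sub, sub_eq_iff_eq_add, add_left_cancel_iff] at hzz'
  rwa [← hzz']

end Prime

def IsCriticalTriple (A B C : Finset (ZMod p)) : Prop :=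
  (0 : ZMod p) ∉ A + B + C ∧ p < #A + #B + #C

namespace IsCriticalTriple

variable {A B C : Finset (ZMod p)}

lemma swap_left (h : IsCriticalTriple A B C) : IsCriticalTriple B A C :=
  ⟨by rw [add_comm B A]; exact h.1, by have := h.2; omega⟩

lemma swap_right (h : IsCriticalTriple A B C) : IsCriticalTriple A C B :=
  ⟨by rw [add_right_comm]; exact h.1, by have := h.2; omega⟩

lemma addDysonETransform (h : IsCriticalTriple A B C) (e : ZMod p) :
    IsCriticalTriple A (addDysonETransform e (C, B)).2 (addDysonETransform e (C, B)).1 := by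
  refine ⟨fun h0 => h.1 ?_, ?_⟩
  · rw [add_assoc] at h0 ⊢
    rw [add_comm B C]
    exact add_subset_add_left (by rw [add_comm]; exact addDysonETransform.subset e (C, B)) h0
  · have := Finset.addDysonETransform.card e (C, B)
    have := h.2
    dsimp only at *
    omega

variable [Fact p.Prime] {d : ZMod p}

lemma card_add_add_card_le (h : IsCriticalTriple A B C) (hA : A.Nonempty) (hB : B.Nonempty)
    (hC : C.Nonempty) : #(A + B) + #C ≤ p := by
  have hsub : A + B + C ⊆ univ.erase 0 := fun x hx =>
    mem_erase.2 ⟨fun hx0 => h.1 (hx0 ▸ hx), mem_univ x⟩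
  have h₁ := card_le_card hsub
  rw [card_erase_of_mem (mem_univ _), card_univ, ZMod.card] at h₁
  have h₂ : min p (#(A + B) + #C - 1) ≤ #(A + B + C) :=
    ZMod.cauchy_davenport Fact.out (hA.add hB) hC
  have := hC.card_pos
  have := (Fact.out : p.Prime).pos
  omega

lemma card_add (h : IsCriticalTriple A B C) (hA : A.Nonempty) (hB : B.Nonempty)
    (hC : C.Nonempty) : #(A + B) + 1 = #A + #B := by
  have h₁ := h.card_add_add_card_le hA hB hC
  have h₂ : min p (#A + #B - 1) ≤ #(A + B) := ZMod.cauchy_davenport Fact.out hA hB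
  have := h.2
  have := hC.card_pos
  omega

lemma card_add_card_add_card (h : IsCriticalTriple A B C) (hA : A.Nonempty) (hB : B.Nonempty)
    (hC : C.Nonempty) : #A + #B + #C = p + 1 := by
  have := h.card_add_add_card_le hA hB hC
  have := h.card_add hA hB hC
  have := h.2
  omega

lemma isAP_of_isAP (h : IsCriticalTriple A B C) (hA : IsAP (A : Set (ZMod p)) d)
    (hA2 : 2 ≤ #A) (hB : B.Nonempty) (hC2 : 2 ≤ #C) : IsAP (B : Set (ZMod p)) d := by
  obtain ⟨A', hA', hcard, hsub⟩ := hA.exists_add_pair_subset hA2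
  have hA₀ : A.Nonempty := card_pos.1 (by omega)
  have hC₀ : C.Nonempty := card_pos.1 (by omega)
  have hsum := h.card_add_card_add_card hA₀ hB hC₀
  have hBA := h.swap_left.card_add hB hA₀ hC₀
  have hCD : min p (#(B + {0, d}) + #A' - 1) ≤ #(B + {0, d} + A') :=
    ZMod.cauchy_davenport Fact.out (hB.add (insert_nonempty 0 {d})) hA'
  have hle : #(B + {0, d} + A') ≤ #(B + A) := by
    refine card_le_card ?_
    rw [add_assoc, add_comm {0, d}]
    exact add_subset_add_left hsub
  have := hA'.card_pos
  refine isAP_of_card_add_pair_le (hA.ne_zero hA2) hB (fun hu => ?_) (by omega)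
  rw [hu, card_univ, ZMod.card] at hsum
  omega

lemma exists_two_le_card_inter_vadd (h : IsCriticalTriple A B C) (hA : 3 ≤ #A)
    (hAB : #A ≤ #B) (hAC : #A ≤ #C) : ∃ e : ZMod p, 2 ≤ #(B ∩ (e +ᵥ C)) ∧ ¬B ⊆ e +ᵥ C := by
  by_contra! hstuck
  have hA₀ : A.Nonempty := card_pos.1 (by omega)
  have hB₀ : B.Nonempty := card_pos.1 (by omega)
  have hC₀ : C.Nonempty := card_pos.1 (by omega)
  have hsum := h.card_add_card_add_card hA₀ hB₀ hC₀
  have hAB' := h.card_add hA₀ hB₀ hC₀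
  have hC : C ≠ univ := fun hu => by
    rw [hu, card_univ, ZMod.card] at hsum
    omega
  have hBC : Fintype.card (ZMod p) < #B * #C := by
    rw [ZMod.card]
    nlinarith
  obtain ⟨e, he⟩ := exists_subset_vadd_of_card_lt hBC hstuck
  have := three_mul_card_le_card_add_add_three hA fun t ht =>
    card_inter_vadd_le_one hC hstuck he ht
  omega

theorem exists_isAP_of_le (h : IsCriticalTriple A B C) (hA : 2 ≤ #A)
    (hAB : #A ≤ #B) (hBC : #B ≤ #C) :
    ∃ d, IsAP (A : Set (ZMod p)) d ∧ IsAP (B : Set (ZMod p)) d ∧ IsAP (C : Set (ZMod p)) d := by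
  induction hn : p - #C using Nat.strong_induction_on generalizing A B C with
  | _ n ih =>
  suffices ∃ d, IsAP (A : Set (ZMod p)) d from this.imp fun d hd =>
    ⟨hd, h.isAP_of_isAP hd hA (card_pos.1 (by omega)) (by omega),
      h.swap_right.isAP_of_isAP hd hA (card_pos.1 (by omega)) (by omega)⟩
  rcases hA.eq_or_lt with hA2 | hA3
  · exact exists_isAP_of_card_eq_two hA2.symm
  obtain ⟨e, he2, hsub⟩ := h.exists_two_le_card_inter_vadd hA3 hAB (hAB.trans hBC)
  have hcrit := h.addDysonETransform (-e)
  have hcard := Finset.addDysonETransform.card (-e) (C, B)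
  simp only [addDysonETransform_fst, addDysonETransform_snd, neg_neg] at hcrit hcard
  have hlt : #(B ∩ (e +ᵥ C)) < #B := card_lt_card <|
    ssubset_of_subset_of_ne inter_subset_left fun heq => hsub (heq ▸ inter_subset_right)
  have hmeasure : p - #(C ∪ (-e +ᵥ B)) < n := by
    have := card_le_univ (C ∪ (-e +ᵥ B))
    rw [ZMod.card] at this
    omega
  rcases le_total #A #(B ∩ (e +ᵥ C)) with hAB' | hBA'
  · obtain ⟨d, hd, -⟩ := ih _ hmeasure hcrit hA hAB' (by omega) rfl
    exact ⟨d, hd⟩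
  · obtain ⟨d, -, hd, -⟩ := ih _ hmeasure hcrit.swap_left he2 hBA' (by omega) rfl
    exact ⟨d, hd⟩

theorem exists_isAP (h : IsCriticalTriple A B C) (hA : 2 ≤ #A) (hB : 2 ≤ #B)
    (hC : 2 ≤ #C) :
    ∃ d, IsAP (A : Set (ZMod p)) d ∧ IsAP (B : Set (ZMod p)) d ∧ IsAP (C : Set (ZMod p)) d := by
  wlog hAB : #A ≤ #B generalizing A B C
  · obtain ⟨d, hB, hA, hC⟩ := this h.swap_left hB hA hC (by omega)
    exact ⟨d, hA, hB, hC⟩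
  wlog hAC : #A ≤ #C generalizing A B C
  · obtain ⟨d, hC, hA, hB⟩ := this h.swap_right.swap_left hC hA hB (by omega) (by omega)
    exact ⟨d, hA, hB, hC⟩
  wlog hBC : #B ≤ #C generalizing A B C
  · obtain ⟨d, hA, hC, hB⟩ := this h.swap_right hA hC hB hAC hAB (by omega)
    exact ⟨d, hA, hB, hC⟩
  exact h.exists_isAP_of_le hA hAB hBC

end IsCriticalTriple

end ZMod

theorem stmt_16 (p : ℕ) (hp : p.Prime)
    (A B C : Set (ZMod p)) (hA : A.Nonempty) (hB : B.Nonempty) (hC : C.Nonempty)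
    (h0 : (0 : ZMod p) ∉ A + B + C)
    (hbig : A.ncard + B.ncard + C.ncard > p) :
    min (A.ncard) (min B.ncard C.ncard) = 1 ∨
      ∃ d : ZMod p, IsAP A d ∧ IsAP B d ∧ IsAP C d := by
  have := Fact.mk hp
  obtain ⟨A, rfl⟩ := A.toFinite.exists_finset_coe
  obtain ⟨B, rfl⟩ := B.toFinite.exists_finset_coe
  obtain ⟨C, rfl⟩ := C.toFinite.exists_finset_coe
  simp only [Set.ncard_coe_finset, coe_nonempty] at hA hB hC hbig ⊢
  have hcrit : ZMod.IsCriticalTriple A B C := ⟨by exact_mod_cast h0, hbig⟩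
  have := hA.card_pos
  have := hB.card_pos
  have := hC.card_pos
  by_cases hone : min #A (min #B #C) = 1
  · exact Or.inl hone
  · exact Or.inr (hcrit.exists_isAP (by omega) (by omega) (by omega))
end

section
/- Let G be an abelian group, A a finite subset not contained in any proper subgroup coset ([A] = G), and suppose H < G is a proper subgroup and D a finite subset with (A,D) critical, |D| > |A|/2, and D contained in a single H-coset. If A meets at least three distinct H-cosets, then |A+D| ≥ 2|H| + |D| ≥ |A| + |D|, a contradiction; hence A meets at most two H-cosets. -/
open Pointwise

theorem stmt_17 {G : Type*} [AddCommGroup G]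
    (A : Set G) (hAfin : A.Finite) (hA : A.Nonempty)
    (hclosure : ∀ (K : AddSubgroup G) (x : G), A ⊆ x +ᵥ (K : Set G) → K = ⊤)
    (H : AddSubgroup G) (hH : H ≠ ⊤)
    (D : Set G) (hDfin : D.Finite) (hD : D.Nonempty)
    (hcrit : (A + D).ncard < A.ncard + D.ncard)
    (hDbig : 2 * D.ncard > A.ncard)
    (hDcoset : ∃ x : G, D ⊆ x +ᵥ (H : Set G)) :
    ((QuotientAddGroup.mk (s := H)) '' A).ncard ≤ 2 := by
  by_contra hcon
  push_neg at hcon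
  obtain ⟨x, hx⟩ := hDcoset
  set π : G → G ⧸ H := QuotientAddGroup.mk with hπ
  have hSfin : (π '' A).Finite := hAfin.image π
  rw [Set.ncard_eq_toFinset_card _ hSfin] at hcon
  obtain ⟨q1, q2, q3, hq1, hq2, hq3, h12, h13, h23⟩ := Finset.two_lt_card_iff.mp hcon
  rw [Set.Finite.mem_toFinset] at hq1 hq2 hq3
  obtain ⟨a1, ha1, rfl⟩ := hq1
  obtain ⟨a2, ha2, rfl⟩ := hq2
  obtain ⟨a3, ha3, rfl⟩ := hq3
  -- every element of D maps to π x
  have hDmap : ∀ d ∈ D, π d = π x := by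
    intro d hd
    obtain ⟨h, hh, rfl⟩ := hx hd
    show QuotientAddGroup.mk (x + h) = QuotientAddGroup.mk x
    rw [QuotientAddGroup.mk_add, (QuotientAddGroup.eq_zero_iff h).mpr hh, add_zero]
  have key : ∀ a : G, ∀ z ∈ a +ᵥ D, π z = π a + π x := by
    intro a z hz
    obtain ⟨d, hd, rfl⟩ := hz
    show QuotientAddGroup.mk (a + d) = _
    rw [QuotientAddGroup.mk_add]
    exact congrArg (fun t => (QuotientAddGroup.mk a : G ⧸ H) + t) (hDmap d hd)
  have hdisj : ∀ a b : G, π a ≠ π b → Disjoint (a +ᵥ D) (b +ᵥ D) := by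
    intro a b hab
    rw [Set.disjoint_left]
    intro z hza hzb
    exact hab (by
      have h1 := key a z hza
      have h2 := key b z hzb
      exact add_right_cancel (h1.symm.trans h2))
  have hsub : ∀ a ∈ A, a +ᵥ D ⊆ A + D := by
    intro a ha z hz
    obtain ⟨d, hd, rfl⟩ := hz
    exact Set.add_mem_add ha hd
  have hcardv : ∀ a : G, (a +ᵥ D).ncard = D.ncard := fun a => Set.ncard_vadd_set a D
  have hDfin' : ∀ a : G, (a +ᵥ D).Finite := fun a => hDfin.vadd_set
  have hUsub : (a1 +ᵥ D) ∪ (a2 +ᵥ D) ∪ (a3 +ᵥ D) ⊆ A + D := by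
    intro z hz
    rcases hz with (hz | hz) | hz
    exacts [hsub a1 ha1 hz, hsub a2 ha2 hz, hsub a3 ha3 hz]
  have hADfin : (A + D).Finite := hAfin.add hDfin
  have hcount : ((a1 +ᵥ D) ∪ (a2 +ᵥ D) ∪ (a3 +ᵥ D)).ncard = 3 * D.ncard := by
    rw [Set.ncard_union_eq (by
        exact Set.disjoint_union_left.mpr ⟨hdisj a1 a3 h13, hdisj a2 a3 h23⟩)
      (((hDfin' a1).union (hDfin' a2))) (hDfin' a3),
      Set.ncard_union_eq (hdisj a1 a2 h12) (hDfin' a1) (hDfin' a2),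
      hcardv, hcardv, hcardv]
    ring
  have hle : 3 * D.ncard ≤ (A + D).ncard := by
    rw [← hcount]
    exact Set.ncard_le_ncard hUsub hADfin
  omega
end

section
/- Let G be a finite abelian group, H < G a finite proper subgroup with G/H cyclic generated by the coset R. Suppose A, B ⊆ G are such that A is a union of cosets forming an R-sequence {S, S+R, ..., S+kR} with k ≥ 1, B is likewise a union of cosets forming an R-sequence of length ≥ 2, and C = G \ (-(A+B)) is not contained in a single H-coset. Then (A,B,C) is a maximal critical trio with |A|+|B|+|C|-|G| = |H|. -/
open Pointwise

section Aux

variable {G : Type*} [AddCommGroup G] (H : AddSubgroup G)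

lemma aux18_mem_coset {x g : G} :
    x ∈ g +ᵥ (H : Set G) ↔ (x : G ⧸ H) = (g : G ⧸ H) := by
  rw [Set.mem_vadd_set_iff_neg_vadd_mem]
  constructor
  · intro h
    exact ((QuotientAddGroup.eq).mpr h).symm
  · intro h
    exact (QuotientAddGroup.eq).mp h.symm

lemma aux18_card_preimage [Fintype G] (T : Set (G ⧸ H)) :
    ((QuotientAddGroup.mk ⁻¹' T : Set G)).ncard = Nat.card H * T.ncard := by
  rw [← Nat.card_coe_set_eq, ← Nat.card_coe_set_eq,
    Nat.card_congr (QuotientAddGroup.preimageMkEquivAddSubgroupProdSet H T), Nat.card_prod]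

end Aux

theorem stmt_18 {G : Type*} [AddCommGroup G] [Fintype G]
    (H : AddSubgroup G) (hH : H ≠ ⊤)
    (r : G) (hgen : AddSubgroup.zmultiples ((QuotientAddGroup.mk r) : G ⧸ H) = ⊤)
    (A B C : Set G)
    (s t : G) (k l : ℕ) (hk : k ≥ 1) (hl : l ≥ 1)
    (hAseq : A = ⋃ i ∈ Finset.range (k + 1), ((s + (i : ℤ) • r) +ᵥ (H : Set G)))
    (hBseq : B = ⋃ i ∈ Finset.range (l + 1), ((t + (i : ℤ) • r) +ᵥ (H : Set G)))
    (hC : C = (-(A + B))ᶜ)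
    (hCspread : ¬ ∃ x : G, C ⊆ x +ᵥ (H : Set G)) :
    (0 : G) ∉ A + B + C ∧
    A.ncard + B.ncard + C.ncard > Fintype.card G ∧
    (∀ Astar Bstar Cstar : Set G, A ⊆ Astar → B ⊆ Bstar → C ⊆ Cstar →
      (0 : G) ∉ Astar + Bstar + Cstar → Astar = A ∧ Bstar = B ∧ Cstar = C) ∧
    (A.ncard : ℤ) + B.ncard + C.ncard - Fintype.card G = Nat.card H := by
  set q : G ⧸ H := (r : G ⧸ H) with hq
  set n : ℕ := Nat.card (G ⧸ H) with hn
  have hn0 : 0 < n := Nat.card_pos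
  -- order of q is n
  have hord : addOrderOf q = n := by
    have h1 := Nat.card_zmultiples q
    rw [hgen] at h1
    rw [← h1, hn]
    exact Nat.card_congr (AddSubgroup.topEquiv (G := G ⧸ H)).toEquiv
  have hnq : (n : ℤ) • q = 0 := by
    rw [natCast_zsmul, ← hord, addOrderOf_nsmul_eq_zero]
  -- injectivity of i ↦ i • q on [0, n)
  have hinj : ∀ i j : ℕ, i < n → j < n → (i : ℤ) • q = (j : ℤ) • q → i = j := by
    intro i j hi hj hij
    rw [natCast_zsmul, natCast_zsmul] at hij
    exact nsmul_injOn_Iio_addOrderOf (by rwa [hord]) (by rwa [hord]) hij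
  -- surjectivity: every element is base + j • q with j < n
  have hsurj : ∀ b y : G ⧸ H, ∃ j : ℕ, j < n ∧ y = b + (j : ℤ) • q := by
    intro b y
    have hmem : y - b ∈ AddSubgroup.zmultiples q := by rw [hgen]; trivial
    obtain ⟨m, hm⟩ := AddSubgroup.mem_zmultiples_iff.mp hmem
    refine ⟨(m % n).toNat, ?_, ?_⟩
    · have h1 : m % n < n := Int.emod_lt_of_pos m (by exact_mod_cast hn0)
      omega
    · have h0 : (0 : ℤ) ≤ m % n := Int.emod_nonneg m (by exact_mod_cast hn0.ne')
      have h2 : (((m % n).toNat : ℤ)) = m % n := Int.toNat_of_nonneg h0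
      have h3 : m • q = (m % n) • q := by
        have : m = n * (m / n) + m % n := (Int.mul_ediv_add_emod m n).symm
        calc m • q = (n * (m / n) + m % n) • q := by rw [← this]
          _ = (m / n) • ((n : ℤ) • q) + (m % n) • q := by
              rw [add_zsmul, mul_comm, mul_zsmul]
          _ = (m % n) • q := by rw [hnq, smul_zero, zero_add]
      rw [h2, ← h3, hm]
      abel
  -- membership characterizations
  have hmemA : ∀ x : G, x ∈ A ↔ ∃ i ≤ k, (x : G ⧸ H) = (s : G ⧸ H) + (i : ℤ) • q := by
    intro x
    rw [hAseq]
    simp only [Set.mem_iUnion, Finset.mem_range, aux18_mem_coset,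
      QuotientAddGroup.mk_add, QuotientAddGroup.mk_zsmul]
    constructor
    · rintro ⟨i, hi, h⟩; exact ⟨i, by omega, h⟩
    · rintro ⟨i, hi, h⟩; exact ⟨i, by omega, h⟩
  have hmemB : ∀ x : G, x ∈ B ↔ ∃ i ≤ l, (x : G ⧸ H) = (t : G ⧸ H) + (i : ℤ) • q := by
    intro x
    rw [hBseq]
    simp only [Set.mem_iUnion, Finset.mem_range, aux18_mem_coset,
      QuotientAddGroup.mk_add, QuotientAddGroup.mk_zsmul]
    constructor
    · rintro ⟨i, hi, h⟩; exact ⟨i, by omega, h⟩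
    · rintro ⟨i, hi, h⟩; exact ⟨i, by omega, h⟩
  have hmemAB : ∀ x : G, x ∈ A + B ↔
      ∃ i ≤ k + l, (x : G ⧸ H) = (s : G ⧸ H) + (t : G ⧸ H) + (i : ℤ) • q := by
    intro x
    constructor
    · intro hx
      obtain ⟨a, ha, b, hb, hab⟩ := Set.mem_add.mp hx
      obtain ⟨i1, hi1, ha'⟩ := (hmemA a).mp ha
      obtain ⟨i2, hi2, hb'⟩ := (hmemB b).mp hb
      refine ⟨i1 + i2, by omega, ?_⟩
      have : ((i1 + i2 : ℕ) : ℤ) • q = (i1 : ℤ) • q + (i2 : ℤ) • q := by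
        push_cast
        rw [add_zsmul]
      rw [← hab, QuotientAddGroup.mk_add, ha', hb', this]
      abel
    · rintro ⟨i, hi, hx⟩
      obtain ⟨i1, i2, hii, hi1, hi2⟩ : ∃ i1 i2 : ℕ, i = i1 + i2 ∧ i1 ≤ k ∧ i2 ≤ l := by
        by_cases hik : i ≤ k
        · exact ⟨i, 0, by omega, by omega, by omega⟩
        · exact ⟨k, i - k, by omega, le_refl _, by omega⟩
      refine Set.mem_add.mpr ⟨s + ((i1 : ℕ) : ℤ) • r, ?_,
        x - (s + ((i1 : ℕ) : ℤ) • r), ?_, by abel⟩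
      · exact (hmemA _).mpr ⟨i1, hi1, by
          rw [QuotientAddGroup.mk_add, QuotientAddGroup.mk_zsmul]⟩
      · refine (hmemB _).mpr ⟨i2, hi2, ?_⟩
        rw [QuotientAddGroup.mk_sub, hx, QuotientAddGroup.mk_add,
          QuotientAddGroup.mk_zsmul]
        have hcast : (i : ℤ) = ((i1 : ℕ) : ℤ) + ((i2 : ℕ) : ℤ) := by
          exact_mod_cast congrArg (Nat.cast : ℕ → ℤ) hii
        rw [hcast, add_zsmul]
        abel
  have hmemC : ∀ x : G, x ∈ C ↔
      ∀ i ≤ k + l, (x : G ⧸ H) ≠ -((s : G ⧸ H) + (t : G ⧸ H) + (i : ℤ) • q) := by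
    intro x
    rw [hC, Set.mem_compl_iff, Set.mem_neg]
    rw [hmemAB (-x)]
    simp only [QuotientAddGroup.mk_neg]
    constructor
    · intro h i hi hx
      exact h ⟨i, hi, by rw [hx]; abel⟩
    · rintro h ⟨i, hi, hx⟩
      exact h i hi (by rw [← hx]; abel)
  -- the crucial bound k + l + 3 ≤ n from hCspread
  have hbound : k + l + 3 ≤ n := by
    by_contra hcon
    push_neg at hcon
    apply hCspread
    refine ⟨-(s + t + ((k + l + 1 : ℕ) : ℤ) • r), fun x hx => ?_⟩
    rw [aux18_mem_coset]
    obtain ⟨j, hjn, hxq⟩ := hsurj ((s : G ⧸ H) + (t : G ⧸ H)) (-(x : G ⧸ H))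
    have hjge : k + l + 1 ≤ j := by
      by_contra h'
      push_neg at h'
      exact (hmemC x).mp hx j (by omega) (by rw [← hxq]; abel)
    have hj : j = k + l + 1 := by omega
    subst hj
    rw [QuotientAddGroup.mk_neg, QuotientAddGroup.mk_add, QuotientAddGroup.mk_add,
      QuotientAddGroup.mk_zsmul]
    exact neg_eq_iff_eq_neg.mp hxq
  -- set descriptions as preimages
  have hAset : A = QuotientAddGroup.mk ⁻¹'
      ((fun i : ℕ => (s : G ⧸ H) + (i : ℤ) • q) '' Set.Iic k) := by
    ext x
    rw [hmemA]
    simp [Set.mem_image, Set.mem_Iic, eq_comm]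
  have hBset : B = QuotientAddGroup.mk ⁻¹'
      ((fun i : ℕ => (t : G ⧸ H) + (i : ℤ) • q) '' Set.Iic l) := by
    ext x
    rw [hmemB]
    simp [Set.mem_image, Set.mem_Iic, eq_comm]
  have hCset : C = QuotientAddGroup.mk ⁻¹'
      ((-((fun i : ℕ => (s : G ⧸ H) + (t : G ⧸ H) + (i : ℤ) • q) '' Set.Iic (k + l)))ᶜ) := by
    ext x
    rw [hmemC]
    simp only [Set.mem_preimage, Set.mem_compl_iff, Set.mem_neg, Set.mem_image,
      Set.mem_Iic, not_exists, not_and]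
    constructor
    · rintro h i hi hx
      exact h i hi (neg_eq_iff_eq_neg.mp hx.symm)
    · intro h i hi hx
      exact h i hi (neg_eq_iff_eq_neg.mpr hx).symm
  -- injectivity on segments
  have hinjOn : ∀ (b : G ⧸ H) (m : ℕ), m < n →
      Set.InjOn (fun i : ℕ => b + (i : ℤ) • q) (Set.Iic m) := by
    intro b m hm i hi j hj hij
    simp only [Set.mem_Iic] at hi hj
    simp only at hij
    exact hinj i j (by omega) (by omega) (add_left_cancel hij)
  have hcardIic : ∀ (b : G ⧸ H) (m : ℕ), m < n →
      ((fun i : ℕ => b + (i : ℤ) • q) '' Set.Iic m).ncard = m + 1 := by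
    intro b m hm
    rw [Set.ncard_image_of_injOn (hinjOn b m hm), ← Finset.coe_Iic,
      Set.ncard_coe_finset, Nat.card_Iic]
  -- cardinalities
  have hcardA : A.ncard = Nat.card H * (k + 1) := by
    rw [hAset, aux18_card_preimage, hcardIic _ k (by omega)]
  have hcardB : B.ncard = Nat.card H * (l + 1) := by
    rw [hBset, aux18_card_preimage, hcardIic _ l (by omega)]
  have hcardC : C.ncard = Nat.card H * (n - (k + l + 1)) := by
    rw [hCset, aux18_card_preimage]
    congr 1
    have h1 : (-((fun i : ℕ => (s : G ⧸ H) + (t : G ⧸ H) + (i : ℤ) • q) '' Set.Iic (k + l))).ncard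
        = k + l + 1 := by
      rw [← Set.image_neg_eq_neg, Set.ncard_image_of_injective _ neg_injective,
        hcardIic _ (k + l) (by omega)]
    have h2 := Set.ncard_add_ncard_compl
      (-((fun i : ℕ => (s : G ⧸ H) + (t : G ⧸ H) + (i : ℤ) • q) '' Set.Iic (k + l)))
    rw [h1] at h2
    have h4 : Nat.card (G ⧸ H) = n := hn.symm
    omega
  have hcardG : Fintype.card G = n * Nat.card H := by
    rw [← Nat.card_eq_fintype_card, AddSubgroup.card_eq_card_quotient_mul_card_addSubgroup H, hn]
  have hHpos : 0 < Nat.card H := Nat.card_pos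
  obtain ⟨m, hm⟩ : ∃ m : ℕ, n = k + l + 3 + m := ⟨n - (k + l + 3), by omega⟩
  -- Goal 1
  have goal1 : (0 : G) ∉ A + B + C := by
    intro h0
    obtain ⟨p, hp, c, hcC, hpc⟩ := Set.mem_add.mp h0
    rw [hC, Set.mem_compl_iff, Set.mem_neg] at hcC
    apply hcC
    have hcp : c = -p := eq_neg_of_add_eq_zero_right hpc
    have : -c = p := by rw [hcp, neg_neg]
    rwa [this]
  -- key lemma for maximality
  have key : ∀ (u v : G) (a b : ℕ), a + b + 3 ≤ n →
      ∀ x : G, (¬ ∃ i ≤ a, (x : G ⧸ H) = (u : G ⧸ H) + (i : ℤ) • q) →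
      ∃ b' c : G, (∃ j2 ≤ b, (b' : G ⧸ H) = (v : G ⧸ H) + (j2 : ℤ) • q) ∧
        (∀ i' ≤ a + b, (c : G ⧸ H) ≠ -((u : G ⧸ H) + (v : G ⧸ H) + (i' : ℤ) • q)) ∧
        x + b' + c = 0 := by
    intro u v a b hab x hx
    obtain ⟨j, hjn, hxq⟩ := hsurj (u : G ⧸ H) (x : G ⧸ H)
    have hja : a + 1 ≤ j := by
      by_contra h'
      push_neg at h'
      exact hx ⟨j, by omega, hxq⟩
    obtain ⟨i, j2, hi1, hj2, hi2, hi3⟩ :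
        ∃ i j2 : ℕ, i = j + j2 ∧ j2 ≤ b ∧ a + b + 1 ≤ i ∧ i < n := by
      by_cases hcase : a + b + 1 ≤ j
      · exact ⟨j, 0, by omega, by omega, hcase, hjn⟩
      · exact ⟨a + b + 1, a + b + 1 - j, by omega, by omega, le_refl _, by omega⟩
    refine ⟨-x + u + v + (i : ℤ) • r, -(u + v + (i : ℤ) • r), ⟨j2, hj2, ?_⟩, ?_, by abel⟩
    · rw [QuotientAddGroup.mk_add, QuotientAddGroup.mk_add, QuotientAddGroup.mk_add,
        QuotientAddGroup.mk_neg, QuotientAddGroup.mk_zsmul, hxq]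
      have hcast : (i : ℤ) = (j : ℤ) + (j2 : ℤ) := by exact_mod_cast hi1
      rw [hcast, add_zsmul]
      abel
    · intro i' hi' heq
      rw [QuotientAddGroup.mk_neg, QuotientAddGroup.mk_add, QuotientAddGroup.mk_add,
        QuotientAddGroup.mk_zsmul] at heq
      have h1 : (i : ℤ) • q = (i' : ℤ) • q := by
        have := neg_injective heq
        exact add_left_cancel this
      have := hinj i i' hi3 (by omega) h1
      omega
  -- claims
  have claimBC : ∀ x : G, x ∉ A → ∃ b ∈ B, ∃ c ∈ C, x + b + c = 0 := by
    intro x hx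
    obtain ⟨b', c, ⟨j2, hj2, hb'⟩, hcC, hsum⟩ :=
      key s t k l hbound x (fun h => hx ((hmemA x).mpr h))
    exact ⟨b', (hmemB b').mpr ⟨j2, hj2, hb'⟩, c, (hmemC c).mpr hcC, hsum⟩
  have claimAC : ∀ x : G, x ∉ B → ∃ a ∈ A, ∃ c ∈ C, x + a + c = 0 := by
    intro x hx
    obtain ⟨b', c, ⟨j2, hj2, hb'⟩, hcC, hsum⟩ :=
      key t s l k (by omega) x (fun h => hx ((hmemB x).mpr h))
    refine ⟨b', (hmemA b').mpr ⟨j2, hj2, hb'⟩, c, (hmemC c).mpr ?_, hsum⟩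
    intro i hi
    have := hcC i (by omega)
    intro hcontra
    apply this
    rw [hcontra]
    congr 1
    abel
  have claimAB : ∀ x : G, x ∉ C → ∃ a ∈ A, ∃ b ∈ B, x + a + b = 0 := by
    intro x hx
    rw [hmemC] at hx
    push_neg at hx
    obtain ⟨i, hi, hxq⟩ := hx
    have : (-x : G) ∈ A + B := by
      apply (hmemAB (-x)).mpr
      exact ⟨i, hi, by rw [QuotientAddGroup.mk_neg, hxq, neg_neg]⟩
    obtain ⟨a, ha, b, hb, hab⟩ := Set.mem_add.mp this
    exact ⟨a, ha, b, hb, by rw [add_assoc, hab, add_neg_cancel]⟩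
  -- Goal 3 maximality
  have goal3 : ∀ Astar Bstar Cstar : Set G, A ⊆ Astar → B ⊆ Bstar → C ⊆ Cstar →
      (0 : G) ∉ Astar + Bstar + Cstar → Astar = A ∧ Bstar = B ∧ Cstar = C := by
    intro A' B' C' hA' hB' hC' h0
    refine ⟨Set.Subset.antisymm (fun x hx => ?_) hA',
      Set.Subset.antisymm (fun x hx => ?_) hB',
      Set.Subset.antisymm (fun x hx => ?_) hC'⟩
    · by_contra hxA
      obtain ⟨b, hb, c, hcc, hsum⟩ := claimBC x hxA
      apply h0
      rw [← hsum]
      exact Set.add_mem_add (Set.add_mem_add hx (hB' hb)) (hC' hcc)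
    · by_contra hxB
      obtain ⟨a, ha, c, hcc, hsum⟩ := claimAC x hxB
      apply h0
      have : (0 : G) = a + x + c := by rw [← hsum]; abel
      rw [this]
      exact Set.add_mem_add (Set.add_mem_add (hA' ha) hx) (hC' hcc)
    · by_contra hxC
      obtain ⟨a, ha, b, hb, hsum⟩ := claimAB x hxC
      apply h0
      have : (0 : G) = a + b + x := by rw [← hsum]; abel
      rw [this]
      exact Set.add_mem_add (Set.add_mem_add (hA' ha) (hB' hb)) hx
  refine ⟨goal1, ?_, goal3, ?_⟩
  · rw [hcardA, hcardB, hcardC, hcardG, hm]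
    have : k + l + 3 + m - (k + l + 1) = m + 2 := by omega
    rw [this]
    nlinarith [hHpos]
  · rw [hcardA, hcardB, hcardC, hcardG, hm]
    have : k + l + 3 + m - (k + l + 1) = m + 2 := by omega
    rw [this]
    push_cast
    ring
end

section
/- Let G be a finite abelian group and H < G a finite proper subgroup. Let B ⊆ G satisfy G_B = H (stabilizer exactly H), let A = H, and let C = G \ (-(A+B)) with C ≠ ∅. Then (A,B,C) is a maximal critical trio with deficiency |A|+|B|+|C|-|G| = |H|. -/
open Pointwise

theorem stmt_19 {G : Type*} [AddCommGroup G] [Fintype G]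
    (H : AddSubgroup G) (hH : H ≠ ⊤)
    (A B C : Set G)
    (hstab : {g : G | ({g} : Set G) + B = B} = (H : Set G))
    (hA : A = (H : Set G))
    (hC : C = (-(A + B))ᶜ) (hCne : C.Nonempty) :
    (0 : G) ∉ A + B + C ∧
    A.ncard + B.ncard + C.ncard > Fintype.card G ∧
    (∀ Astar Bstar Cstar : Set G, A ⊆ Astar → B ⊆ Bstar → C ⊆ Cstar →
      (0 : G) ∉ Astar + Bstar + Cstar → Astar = A ∧ Bstar = B ∧ Cstar = C) ∧
    (A.ncard : ℤ) + B.ncard + C.ncard - Fintype.card G = Nat.card H := by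
  subst hA
  have hB : ∀ g : G, g ∈ H → ({g} : Set G) + B = B := by
    intro g hg
    have : g ∈ {g : G | ({g} : Set G) + B = B} := by rw [hstab]; exact hg
    exact this
  have hAB : (H : Set G) + B = B := by
    apply Set.Subset.antisymm
    · rintro x ⟨a, ha, b, hb, rfl⟩
      rw [← hB a ha]
      exact ⟨a, rfl, b, hb, rfl⟩
    · intro b hb
      exact ⟨0, H.zero_mem, b, hb, zero_add b⟩
  rw [hAB] at hC
  subst hC
  -- Part 1: 0 ∉ A + B + C
  have part1 : (0 : G) ∉ (H : Set G) + B + ((-B)ᶜ) := by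
    rw [hAB]
    rintro ⟨b, hb, c, hc, h0⟩
    have hcb : -c = b := neg_eq_of_add_eq_zero_left h0
    exact hc (Set.mem_neg.mpr (hcb ▸ hb))
  -- cardinality identity
  have hnegB : (-B).ncard = B.ncard := by
    rw [show -B = (fun x : G => -x) '' B by ext x; simp [Set.mem_neg, eq_comm, neg_eq_iff_eq_neg]]
    exact Set.ncard_image_of_injective B neg_injective
  have key : B.ncard + ((-B)ᶜ : Set G).ncard = Fintype.card G := by
    rw [← hnegB]
    exact (Set.ncard_add_ncard_compl (-B)).trans Nat.card_eq_fintype_card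
  have hAcard : ((H : Set G)).ncard = Nat.card H :=
    (Nat.card_coe_set_eq (H : Set G)).symm
  have hHpos : 0 < Nat.card H := Nat.card_pos
  refine ⟨part1, by omega, ?_, by push_cast [hAcard]; omega⟩
  intro Astar Bstar Cstar hAs hBs hCs h0
  have hCeq : Cstar = (-B)ᶜ := by
    apply Set.Subset.antisymm _ hCs
    intro c hc hcB
    refine h0 ?_
    have h1 := Set.add_mem_add (Set.add_mem_add (hAs H.zero_mem) (hBs (Set.mem_neg.mp hcB))) hc
    simpa using h1
  have hBeq : Bstar = B := by
    apply Set.Subset.antisymm _ hBs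
    intro b hb
    by_contra hbB
    have hcC : -b ∈ Cstar := hCs (by simpa [Set.mem_neg] using hbB)
    refine h0 ?_
    have h1 := Set.add_mem_add (Set.add_mem_add (hAs H.zero_mem) hb) hcC
    simpa using h1
  refine ⟨?_, hBeq, hCeq⟩
  apply Set.Subset.antisymm _ hAs
  intro a ha
  have hsub : ({a} : Set G) + B ⊆ B := by
    intro x hx
    obtain ⟨a', ha', b, hb, rfl⟩ := hx
    rw [Set.mem_singleton_iff] at ha'
    subst ha'
    by_contra hxB
    have hcC : -(a' + b) ∈ Cstar := hCs (by simpa [Set.mem_neg] using hxB)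
    refine absurd ?_ h0
    have h1 := Set.add_mem_add (Set.add_mem_add ha (hBs hb)) hcC
    rwa [add_neg_cancel] at h1
  have hcard : B.ncard ≤ (({a} : Set G) + B).ncard := by
    rw [Set.singleton_add]
    rw [Set.ncard_image_of_injective B (add_right_injective a)]
  have heq : ({a} : Set G) + B = B :=
    Set.eq_of_subset_of_ncard_le hsub hcard
  rw [← hstab]
  exact heq
end
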